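/- arXiv:1509.02456 — 11 statements merged into one kernel-verified Lean document; each statement's English description precedes it below -/
import Mathlib

section
/- For every real number φ₀ there exist real numbers u₀ > 0 and v₀ > 0 such that d₁·log u₀ + θ₁·φ₀ + g₁₁·u₀ + g₁₂·v₀ = c₁ and d₂·log v₀ + θ₂·φ₀ + g₂₁·u₀ + g₂₂·v₀ = c₂. (Existence part of Theorem 2.3; no steric-determinant hypothesis is needed.) -/
/-!
Put `Kᵢ = cᵢ - θᵢ φ₀` and pass to logarithmic coordinates `x = log u`, `y = log v`. The first
equation reads `d₁ x + g₁₁ eˣ = K₁ - g₁₂ eʸ`; its left side is an increasing bijection of `ℝ`,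
so it determines `x` as a continuous function of `y`, bounded above. Substituting into the
second equation leaves `d₂ y + g₂₁ eˣ⁽ʸ⁾ + g₂₂ eʸ = K₂`, whose left side grows like `d₂ y` at
both ends and hence takes every real value.
-/

open Filter Function Real

theorem Continuous.surjective_of_linear_bounds {f : ℝ → ℝ} (hf : Continuous f) {a C : ℝ}
    (ha : 0 < a) (hlow : ∀ᶠ y in atTop, a * y ≤ f y) (hup : ∀ᶠ y in atBot, f y ≤ a * y + C) :
    Surjective f :=
  hf.surjective (tendsto_atTop_mono' _ hlow (tendsto_id.const_mul_atTop ha))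
    (tendsto_atBot_mono' _ hup
      (tendsto_atBot_add_const_right _ C (tendsto_id.const_mul_atBot ha)))

theorem strictMono_mul_add_mul_exp {a b : ℝ} (ha : 0 < a) (hb : 0 ≤ b) :
    StrictMono fun x => a * x + b * exp x := fun _ _ hxy => by
  have := exp_le_exp.2 hxy.le
  nlinarith

theorem surjective_mul_add_mul_exp {a b : ℝ} (ha : 0 < a) (hb : 0 ≤ b) :
    Surjective fun x => a * x + b * exp x := by
  refine (by fun_prop : Continuous fun x => a * x + b * exp x).surjective_of_linear_bounds ha
    (C := b) (.of_forall fun x => ?_) ((eventually_le_atBot 0).mono fun x hx => ?_)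
  · have := exp_pos x
    nlinarith
  · have := exp_le_one_iff.2 hx
    nlinarith

noncomputable def mulAddMulExpOrderIso {a b : ℝ} (ha : 0 < a) (hb : 0 ≤ b) : ℝ ≃o ℝ :=
  StrictMono.orderIsoOfSurjective _ (strictMono_mul_add_mul_exp ha hb)
    (surjective_mul_add_mul_exp ha hb)

theorem mulAddMulExpOrderIso_apply {a b : ℝ} (ha : 0 < a) (hb : 0 ≤ b) (x : ℝ) :
    mulAddMulExpOrderIso ha hb x = a * x + b * exp x :=
  rfl

theorem exists_pos_solution_log_linear_system {d₁ d₂ g₁₁ g₁₂ g₂₁ g₂₂ : ℝ}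
    (hd₁ : 0 < d₁) (hd₂ : 0 < d₂) (hg₁₁ : 0 ≤ g₁₁) (hg₁₂ : 0 ≤ g₁₂) (hg₂₁ : 0 ≤ g₂₁)
    (hg₂₂ : 0 ≤ g₂₂) (K₁ K₂ : ℝ) :
    ∃ u v : ℝ, 0 < u ∧ 0 < v ∧ d₁ * log u + g₁₁ * u + g₁₂ * v = K₁ ∧
      d₂ * log v + g₂₁ * u + g₂₂ * v = K₂ := by
  set H := mulAddMulExpOrderIso hd₁ hg₁₁
  set X : ℝ → ℝ := fun y => H.symm (K₁ - g₁₂ * exp y)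
  have hX : ∀ y, X y ≤ H.symm K₁ := fun y =>
    H.symm.monotone (by have := exp_pos y; nlinarith)
  have hF : Surjective fun y => d₂ * y + g₂₁ * exp (X y) + g₂₂ * exp y := by
    refine Continuous.surjective_of_linear_bounds (by fun_prop) hd₂
      (C := g₂₁ * exp (H.symm K₁) + g₂₂) (.of_forall fun y => ?_)
      ((eventually_le_atBot 0).mono fun y hy => ?_)
    · have := exp_pos (X y)
      have := exp_pos y
      nlinarith
    · have := exp_le_exp.2 (hX y)
      have := exp_le_one_iff.2 hy
      nlinarith
  obtain ⟨y, hy⟩ := hF K₂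
  refine ⟨exp (X y), exp y, exp_pos _, exp_pos _, ?_, by simpa using hy⟩
  have hXy := H.apply_symm_apply (K₁ - g₁₂ * exp y)
  rw [mulAddMulExpOrderIso_apply] at hXy
  simp only [log_exp]
  linarith

theorem stmt_0_general (d₁ d₂ θ₁ θ₂ g₁₁ g₁₂ g₂₁ g₂₂ c₁ c₂ : ℝ)
    (hd₁ : 0 < d₁) (hd₂ : 0 < d₂)
    (hg₁₁ : 0 < g₁₁) (hg₁₂ : 0 < g₁₂) (hg₂₁ : 0 < g₂₁) (hg₂₂ : 0 < g₂₂) :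
    ∀ φ₀ : ℝ, ∃ u₀ v₀ : ℝ, 0 < u₀ ∧ 0 < v₀ ∧
      d₁ * Real.log u₀ + θ₁ * φ₀ + g₁₁ * u₀ + g₁₂ * v₀ = c₁ ∧
      d₂ * Real.log v₀ + θ₂ * φ₀ + g₂₁ * u₀ + g₂₂ * v₀ = c₂ := by
  intro φ₀
  obtain ⟨u, v, hu, hv, h₁, h₂⟩ := exists_pos_solution_log_linear_system hd₁ hd₂ hg₁₁.le
    hg₁₂.le hg₂₁.le hg₂₂.le (c₁ - θ₁ * φ₀) (c₂ - θ₂ * φ₀)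
  exact ⟨u, v, hu, hv, by linarith, by linarith⟩

/-- Existence part of Theorem 2.3: for every `φ₀` there exist positive `u₀, v₀`
solving the algebraic system (AE). -/
theorem stmt_0 (d₁ d₂ θ₁ θ₂ g₁₁ g₁₂ g₂₁ g₂₂ c₁ c₂ : ℝ)
    (hd₁ : 0 < d₁) (hd₂ : 0 < d₂) (hθ₁ : 0 < θ₁) (hθ₂ : θ₂ < 0)
    (hg₁₁ : 0 < g₁₁) (hg₁₂ : 0 < g₁₂) (hg₂₁ : 0 < g₂₁) (hg₂₂ : 0 < g₂₂) :
    ∀ φ₀ : ℝ, ∃ u₀ v₀ : ℝ, 0 < u₀ ∧ 0 < v₀ ∧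
      d₁ * Real.log u₀ + θ₁ * φ₀ + g₁₁ * u₀ + g₁₂ * v₀ = c₁ ∧
      d₂ * Real.log v₀ + θ₂ * φ₀ + g₂₁ * u₀ + g₂₂ * v₀ = c₂ :=
  stmt_0_general d₁ d₂ θ₁ θ₂ g₁₁ g₁₂ g₂₁ g₂₂ c₁ c₂ hd₁ hd₂ hg₁₁ hg₁₂ hg₂₁ hg₂₂
end

section
/- Assume (H1). For every real number φ₀, if (u₁, v₁) and (u₂, v₂) are two pairs of positive reals such that both (u₁, v₁, φ₀) and (u₂, v₂, φ₀) satisfy the system (AE), then u₁ = u₂ and v₁ = v₂. (Uniqueness part of Theorem 2.3.) -/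
/-!
Subtracting the equations for two solutions with the same `φ₀` eliminates `φ₀`. Writing
`a = u₁ - u₂`, `b = v₁ - v₂`, `p = d₁ (log u₁ - log u₂)`, `q = d₂ (log v₁ - log v₂)`, we get
`p = -(g₁₁ a + g₁₂ b)` and `q = -(g₂₁ a + g₂₂ b)`. Hence
`g₂₁ p a + g₁₂ q b = -(g₁₁ g₂₁ a² + 2 g₁₂ g₂₁ a b + g₁₂ g₂₂ b²)`, a quadratic form which is
positive semidefinite under (H1). By monotonicity of `log` the left side is a sum of nonnegative
terms, so both vanish, which forces `a = b = 0`.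
-/

section StrictMonoOn

variable {R : Type*} [Ring R] [LinearOrder R] [IsStrictOrderedRing R]
  {f : R → R} {s : Set R} {x y : R}

theorem StrictMonoOn.sub_mul_sub_pos (hf : StrictMonoOn f s) (hx : x ∈ s) (hy : y ∈ s)
    (hne : x ≠ y) : 0 < (f x - f y) * (x - y) := by
  rcases hne.lt_or_gt with hlt | hlt
  · exact mul_pos_of_neg_of_neg (sub_neg.2 (hf hx hy hlt)) (sub_neg.2 hlt)
  · exact mul_pos (sub_pos.2 (hf hy hx hlt)) (sub_pos.2 hlt)

theorem StrictMonoOn.sub_mul_sub_nonneg (hf : StrictMonoOn f s) (hx : x ∈ s) (hy : y ∈ s) :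
    0 ≤ (f x - f y) * (x - y) := by
  rcases eq_or_ne x y with rfl | hne
  · simp
  · exact (hf.sub_mul_sub_pos hx hy hne).le

end StrictMonoOn

theorem quadratic_form_nonneg {R : Type*} [CommRing R] [LinearOrder R] [IsStrictOrderedRing R]
    {A B C : R} (hA : 0 < A) (hdisc : B ^ 2 ≤ A * C) (x y : R) :
    0 ≤ A * x ^ 2 + 2 * B * x * y + C * y ^ 2 := by
  have hsq : A * (A * x ^ 2 + 2 * B * x * y + C * y ^ 2) =
      (A * x + B * y) ^ 2 + (A * C - B ^ 2) * y ^ 2 := by ring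
  refine nonneg_of_mul_nonneg_right (a := A) ?_ hA
  rw [hsq]
  have := sub_nonneg.2 hdisc
  positivity

/-- The map `(u, v) ↦ (f₁ u + g₁₁ u + g₁₂ v, f₂ v + g₂₁ u + g₂₂ v)` is injective on `s × t`. -/
theorem injOn_of_strictMonoOn_of_det_nonneg {R : Type*} [CommRing R] [LinearOrder R]
    [IsStrictOrderedRing R] {f₁ f₂ : R → R} {s t : Set R}
    (hf₁ : StrictMonoOn f₁ s) (hf₂ : StrictMonoOn f₂ t) {g₁₁ g₁₂ g₂₁ g₂₂ : R}
    (hg₁₁ : 0 < g₁₁) (hg₁₂ : 0 < g₁₂) (hg₂₁ : 0 < g₂₁) (hdet : g₁₂ * g₂₁ ≤ g₁₁ * g₂₂)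
    {u₁ u₂ v₁ v₂ : R} (hu₁ : u₁ ∈ s) (hu₂ : u₂ ∈ s) (hv₁ : v₁ ∈ t) (hv₂ : v₂ ∈ t)
    (h₁ : f₁ u₁ + g₁₁ * u₁ + g₁₂ * v₁ = f₁ u₂ + g₁₁ * u₂ + g₁₂ * v₂)
    (h₂ : f₂ v₁ + g₂₁ * u₁ + g₂₂ * v₁ = f₂ v₂ + g₂₁ * u₂ + g₂₂ * v₂) :
    u₁ = u₂ ∧ v₁ = v₂ := by
  have hp := hf₁.sub_mul_sub_nonneg hu₁ hu₂
  have hq := hf₂.sub_mul_sub_nonneg hv₁ hv₂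
  have hform := quadratic_form_nonneg (A := g₁₁ * g₂₁) (B := g₁₂ * g₂₁) (C := g₁₂ * g₂₂)
    (mul_pos hg₁₁ hg₂₁) (by nlinarith [mul_pos hg₁₂ hg₂₁]) (u₁ - u₂) (v₁ - v₂)
  have hsum : g₂₁ * ((f₁ u₁ - f₁ u₂) * (u₁ - u₂)) + g₁₂ * ((f₂ v₁ - f₂ v₂) * (v₁ - v₂)) =
      -(g₁₁ * g₂₁ * (u₁ - u₂) ^ 2 + 2 * (g₁₂ * g₂₁) * (u₁ - u₂) * (v₁ - v₂)
        + g₁₂ * g₂₂ * (v₁ - v₂) ^ 2) := by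
    linear_combination (g₂₁ * (u₁ - u₂)) * h₁ + (g₁₂ * (v₁ - v₂)) * h₂
  have hp0 : (f₁ u₁ - f₁ u₂) * (u₁ - u₂) = 0 := by nlinarith
  have hq0 : (f₂ v₁ - f₂ v₂) * (v₁ - v₂) = 0 := by nlinarith
  constructor
  · by_contra hne
    exact (hf₁.sub_mul_sub_pos hu₁ hu₂ hne).ne' hp0
  · by_contra hne
    exact (hf₂.sub_mul_sub_pos hv₁ hv₂ hne).ne' hq0

theorem strictMonoOn_const_mul_log {d : ℝ} (hd : 0 < d) :
    StrictMonoOn (fun x => d * Real.log x) (Set.Ioi 0) :=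
  fun _ hx _ hy hxy => mul_lt_mul_of_pos_left (Real.strictMonoOn_log hx hy hxy) hd

theorem stmt_1_general (d₁ d₂ θ₁ θ₂ g₁₁ g₁₂ g₂₁ g₂₂ c₁ c₂ : ℝ)
    (hd₁ : 0 < d₁) (hd₂ : 0 < d₂)
    (hg₁₁ : 0 < g₁₁) (hg₁₂ : 0 < g₁₂) (hg₂₁ : 0 < g₂₁)
    (hH1 : 0 ≤ g₁₁ * g₂₂ - g₁₂ * g₂₁) :
    ∀ φ₀ u₁ v₁ u₂ v₂ : ℝ, 0 < u₁ → 0 < v₁ → 0 < u₂ → 0 < v₂ →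
      d₁ * Real.log u₁ + θ₁ * φ₀ + g₁₁ * u₁ + g₁₂ * v₁ = c₁ →
      d₂ * Real.log v₁ + θ₂ * φ₀ + g₂₁ * u₁ + g₂₂ * v₁ = c₂ →
      d₁ * Real.log u₂ + θ₁ * φ₀ + g₁₁ * u₂ + g₁₂ * v₂ = c₁ →
      d₂ * Real.log v₂ + θ₂ * φ₀ + g₂₁ * u₂ + g₂₂ * v₂ = c₂ →
      u₁ = u₂ ∧ v₁ = v₂ := by
  intro φ₀ u₁ v₁ u₂ v₂ hu₁ hv₁ hu₂ hv₂ e₁ e₂ e₃ e₄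
  exact injOn_of_strictMonoOn_of_det_nonneg (strictMonoOn_const_mul_log hd₁)
    (strictMonoOn_const_mul_log hd₂) hg₁₁ hg₁₂ hg₂₁ (sub_nonneg.1 hH1) hu₁ hu₂ hv₁ hv₂
    (by linarith) (by linarith)

/-- Uniqueness part of Theorem 2.3: under (H1), for each `φ₀` the positive
solution of the algebraic system (AE) is unique. -/
theorem stmt_1 (d₁ d₂ θ₁ θ₂ g₁₁ g₁₂ g₂₁ g₂₂ c₁ c₂ : ℝ)
    (hd₁ : 0 < d₁) (hd₂ : 0 < d₂) (hθ₁ : 0 < θ₁) (hθ₂ : θ₂ < 0)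
    (hg₁₁ : 0 < g₁₁) (hg₁₂ : 0 < g₁₂) (hg₂₁ : 0 < g₂₁) (hg₂₂ : 0 < g₂₂)
    (hH1 : 0 ≤ g₁₁ * g₂₂ - g₁₂ * g₂₁) :
    ∀ φ₀ u₁ v₁ u₂ v₂ : ℝ, 0 < u₁ → 0 < v₁ → 0 < u₂ → 0 < v₂ →
      d₁ * Real.log u₁ + θ₁ * φ₀ + g₁₁ * u₁ + g₁₂ * v₁ = c₁ →
      d₂ * Real.log v₁ + θ₂ * φ₀ + g₂₁ * u₁ + g₂₂ * v₁ = c₂ →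
      d₁ * Real.log u₂ + θ₁ * φ₀ + g₁₁ * u₂ + g₁₂ * v₂ = c₁ →
      d₂ * Real.log v₂ + θ₂ * φ₀ + g₂₁ * u₂ + g₂₂ * v₂ = c₂ →
      u₁ = u₂ ∧ v₁ = v₂ :=
  stmt_1_general d₁ d₂ θ₁ θ₂ g₁₁ g₁₂ g₂₁ g₂₂ c₁ c₂ hd₁ hd₂ hg₁₁ hg₁₂ hg₂₁ hH1
end

section
/- Assume (H1). There exist continuously differentiable functions u, v : ℝ → ℝ such that for every φ ∈ ℝ: u(φ) > 0, v(φ) > 0, the triple (u(φ), v(φ), φ) satisfies the system (AE), and moreover any pair of positive reals (a, b) such that (a, b, φ) satisfies (AE) must equal (u(φ), v(φ)). (Theorem 2.3: the solution of (AE) is given by a unique C¹ branch (u(φ), v(φ)).) -/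
open Real Set Filter Topology

lemma aux_inv (p q : ℝ) (hp : 0 < p) (hq : 0 < q) :
    ∃ W : ℝ → ℝ, (∀ s, 0 < W s) ∧ (∀ s, p * Real.log (W s) + q * W s = s) ∧
      (∀ t, 0 < t → W (p * Real.log t + q * t) = t) ∧
      StrictMono W ∧ Continuous W ∧
      (∀ s, HasStrictDerivAt W (W s / (p + q * W s)) s) := by
  set f : ℝ → ℝ := fun t => p * Real.log t + q * t with hfdef
  have hmono : StrictMonoOn f (Ioi (0:ℝ)) := by
    intro a ha b hb hab
    have h1 : Real.log a < Real.log b := Real.log_lt_log ha hab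
    simp only [hfdef]
    nlinarith
  have hex : ∀ s : ℝ, ∃ t, 0 < t ∧ f t = s := by
    intro s
    set lo : ℝ := min 1 (Real.exp ((s - q) / p)) with hlodef
    set hi : ℝ := max 1 (s / q) with hhidef
    have hlopos : 0 < lo := lt_min one_pos (Real.exp_pos _)
    have hlo1 : lo ≤ 1 := min_le_left _ _
    have hlohi : lo ≤ hi := hlo1.trans (le_max_left _ _)
    have hflo : f lo ≤ s := by
      have h1 : Real.log lo ≤ (s - q) / p := by
        have := Real.log_le_log hlopos (min_le_right 1 (Real.exp ((s - q) / p)))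
        rwa [Real.log_exp] at this
      have h2 : p * Real.log lo ≤ s - q := by
        rw [le_div_iff₀ hp] at h1
        nlinarith
      have h3 : q * lo ≤ q := by nlinarith
      simp only [hfdef]; linarith
    have hfhi : s ≤ f hi := by
      have h1 : 0 ≤ Real.log hi := Real.log_nonneg (le_max_left _ _)
      have h2 : s / q ≤ hi := le_max_right _ _
      have h3 : s ≤ q * hi := by rw [div_le_iff₀ hq] at h2; linarith
      simp only [hfdef]; nlinarith
    have hcont : ContinuousOn f (Icc lo hi) := by
      intro x hx
      have hx0 : 0 < x := lt_of_lt_of_le hlopos hx.1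
      exact ((continuousAt_const.mul (Real.continuousAt_log hx0.ne')).add
        (continuousAt_const.mul continuousAt_id)).continuousWithinAt
    have := intermediate_value_Icc hlohi hcont ⟨hflo, hfhi⟩
    obtain ⟨t, htmem, hft⟩ := this
    exact ⟨t, lt_of_lt_of_le hlopos htmem.1, hft⟩
  set W : ℝ → ℝ := fun s => (hex s).choose with hWdef
  have hWpos : ∀ s, 0 < W s := fun s => (hex s).choose_spec.1
  have hWeq : ∀ s, f (W s) = s := fun s => (hex s).choose_spec.2
  have hWleft : ∀ t, 0 < t → W (f t) = t := by
    intro t ht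
    exact hmono.injOn (hWpos (f t)) ht (hWeq (f t))
  have hWmono : StrictMono W := by
    intro s₁ s₂ h12
    rcases lt_trichotomy (W s₁) (W s₂) with h | h | h
    · exact h
    · exfalso
      have : s₁ = s₂ := by rw [← hWeq s₁, ← hWeq s₂, h]
      exact h12.ne this
    · exfalso
      have := hmono (hWpos s₂) (hWpos s₁) h
      rw [hWeq s₁, hWeq s₂] at this
      exact absurd this (not_lt.2 h12.le)
  have hWcont : Continuous W := by
    rw [continuous_iff_continuousAt]
    intro a
    apply StrictMonoOn.continuousAt_of_image_mem_nhds (s := (univ : Set ℝ))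
      (fun x _ y _ hxy => hWmono hxy) univ_mem
    apply mem_of_superset (Ioi_mem_nhds (hWpos a))
    rintro t (ht : 0 < t)
    exact ⟨f t, mem_univ _, hWleft t ht⟩
  have hWderiv : ∀ s, HasStrictDerivAt W (W s / (p + q * W s)) s := by
    intro s
    have ht : 0 < W s := hWpos s
    have hf1 : HasStrictDerivAt f (p * (W s)⁻¹ + q * 1) (W s) :=
      ((Real.hasStrictDerivAt_log ht.ne').const_mul p).add
        ((hasStrictDerivAt_id (W s)).const_mul q)
    have hne : p * (W s)⁻¹ + q * 1 ≠ 0 := by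
      have : 0 < p * (W s)⁻¹ + q * 1 := by positivity
      exact this.ne'
    have hinv := HasStrictDerivAt.of_local_left_inverse hWcont.continuousAt hf1 hne
      (Eventually.of_forall hWeq)
    have heq : (p * (W s)⁻¹ + q * 1)⁻¹ = W s / (p + q * W s) := by
      have h2 : p * (W s)⁻¹ + q * 1 = (p + q * W s) / W s := by
        field_simp
      rw [h2, inv_div]
    rwa [heq] at hinv
  exact ⟨W, hWpos, fun s => hWeq s, hWleft, hWmono, hWcont, hWderiv⟩

lemma aux_mono (d₁ d₂ θ₁ θ₂ g₁₁ g₁₂ g₂₁ g₂₂ c₁ c₂ : ℝ)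
    (hd₁ : 0 < d₁) (hd₂ : 0 < d₂) (hθ₁ : 0 < θ₁) (hθ₂ : θ₂ < 0)
    (hg₁₁ : 0 < g₁₁) (hg₁₂ : 0 < g₁₂) (hg₂₁ : 0 < g₂₁) (hg₂₂ : 0 < g₂₂)
    (hH1 : 0 ≤ g₁₁ * g₂₂ - g₁₂ * g₂₁)
    {φ φ' a b a' b' : ℝ} (ha : 0 < a) (hb : 0 < b) (ha' : 0 < a') (hb' : 0 < b')
    (hφ : φ ≤ φ') (haa : a < a')
    (e1 : d₁ * Real.log a + θ₁ * φ + g₁₁ * a + g₁₂ * b = c₁)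
    (e2 : d₂ * Real.log b + θ₂ * φ + g₂₁ * a + g₂₂ * b = c₂)
    (e1' : d₁ * Real.log a' + θ₁ * φ' + g₁₁ * a' + g₁₂ * b' = c₁)
    (e2' : d₂ * Real.log b' + θ₂ * φ' + g₂₁ * a' + g₂₂ * b' = c₂) : False := by
  have hL1 : Real.log a < Real.log a' := Real.log_lt_log ha haa
  have hX : g₁₂ * (b - b') = d₁ * (Real.log a' - Real.log a) + θ₁ * (φ' - φ)
      + g₁₁ * (a' - a) := by linarith
  have hXp : 0 < g₁₂ * (b - b') := by
    rw [hX]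
    have t1 := mul_pos hd₁ (sub_pos.2 hL1)
    have t2 := mul_nonneg hθ₁.le (sub_nonneg.2 hφ)
    have t3 := mul_pos hg₁₁ (sub_pos.2 haa)
    linarith
  have hBpos : 0 < b - b' := by
    by_contra h
    push_neg at h
    nlinarith
  have hL2 : Real.log b' < Real.log b := Real.log_lt_log hb' (by linarith)
  have hA : g₂₁ * (a' - a) = d₂ * (Real.log b - Real.log b') + (-θ₂) * (φ' - φ)
      + g₂₂ * (b - b') := by linarith
  have h1 : g₁₁ * (a' - a) < g₁₂ * (b - b') := by
    rw [hX]
    have t1 := mul_pos hd₁ (sub_pos.2 hL1)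
    have t2 := mul_nonneg hθ₁.le (sub_nonneg.2 hφ)
    linarith
  have h2 : g₂₂ * (b - b') < g₂₁ * (a' - a) := by
    rw [hA]
    have t1 := mul_pos hd₂ (sub_pos.2 hL2)
    have t2 := mul_nonneg (neg_nonneg.2 hθ₂.le) (sub_nonneg.2 hφ)
    linarith
  have h3 : 0 < g₁₁ * (a' - a) := mul_pos hg₁₁ (sub_pos.2 haa)
  have h4 : 0 < g₂₂ * (b - b') := mul_pos hg₂₂ hBpos
  nlinarith [mul_lt_mul'' h1 h2 h3.le h4.le,
    mul_nonneg hH1 (mul_pos (sub_pos.2 haa) hBpos).le]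

set_option maxHeartbeats 1000000 in
/-- Theorem 2.3: under (H1) the solutions of the algebraic system (AE) form a
unique `C¹` branch `(u(φ), v(φ))`. -/
theorem stmt_2 (d₁ d₂ θ₁ θ₂ g₁₁ g₁₂ g₂₁ g₂₂ c₁ c₂ : ℝ)
    (hd₁ : 0 < d₁) (hd₂ : 0 < d₂) (hθ₁ : 0 < θ₁) (hθ₂ : θ₂ < 0)
    (hg₁₁ : 0 < g₁₁) (hg₁₂ : 0 < g₁₂) (hg₂₁ : 0 < g₂₁) (hg₂₂ : 0 < g₂₂)
    (hH1 : 0 ≤ g₁₁ * g₂₂ - g₁₂ * g₂₁) :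
    ∃ u v : ℝ → ℝ, ContDiff ℝ 1 u ∧ ContDiff ℝ 1 v ∧
      ∀ φ : ℝ, 0 < u φ ∧ 0 < v φ ∧
        d₁ * Real.log (u φ) + θ₁ * φ + g₁₁ * u φ + g₁₂ * v φ = c₁ ∧
        d₂ * Real.log (v φ) + θ₂ * φ + g₂₁ * u φ + g₂₂ * v φ = c₂ ∧
        ∀ a b : ℝ, 0 < a → 0 < b →
          d₁ * Real.log a + θ₁ * φ + g₁₁ * a + g₁₂ * b = c₁ →
          d₂ * Real.log b + θ₂ * φ + g₂₁ * a + g₂₂ * b = c₂ →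
          a = u φ ∧ b = v φ := by
  have hq₀ : 0 < θ₁ * g₂₂ - θ₂ * g₁₂ := by nlinarith [mul_pos hθ₁ hg₂₂]
  have hp₀ : 0 < θ₁ * d₂ := mul_pos hθ₁ hd₂
  obtain ⟨W₀, hW₀pos, hW₀eq, hW₀left, hW₀mono, hW₀cont, hW₀d⟩ :=
    aux_inv (θ₁ * d₂) (θ₁ * g₂₂ - θ₂ * g₁₂) hp₀ hq₀
  set K : ℝ → ℝ := fun t => (θ₁ * c₂ - θ₂ * c₁) + θ₂ * d₁ * Real.log t
    + (θ₂ * g₁₁ - θ₁ * g₂₁) * t with hKdef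
  set V : ℝ → ℝ := fun t => W₀ (K t) with hVdef
  set Φ : ℝ → ℝ := fun t => (c₁ - d₁ * Real.log t - g₁₁ * t - g₁₂ * V t) / θ₁ with hΦdef
  have hVpos : ∀ t, 0 < V t := fun t => hW₀pos (K t)
  have hVeq : ∀ t, (θ₁ * d₂) * Real.log (V t) + (θ₁ * g₂₂ - θ₂ * g₁₂) * V t = K t :=
    fun t => hW₀eq (K t)
  -- the pair (t, V t) solves the system with φ = Φ t
  have heq1 : ∀ t, d₁ * Real.log t + θ₁ * Φ t + g₁₁ * t + g₁₂ * V t = c₁ := by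
    intro t
    rw [hΦdef]
    field_simp
    ring
  have heq2 : ∀ t, d₂ * Real.log (V t) + θ₂ * Φ t + g₂₁ * t + g₂₂ * V t = c₂ := by
    intro t
    have h1 := hVeq t
    have h2 := heq1 t
    rw [hKdef] at h1
    have hθ₁' : θ₁ ≠ 0 := hθ₁.ne'
    have h3 : θ₁ * (d₂ * Real.log (V t) + θ₂ * Φ t + g₂₁ * t + g₂₂ * V t) = θ₁ * c₂ := by
      linear_combination h1 + θ₂ * h2
    exact mul_left_cancel₀ hθ₁' h3
  -- Φ is strictly antitone on (0, ∞)
  have hanti : StrictAntiOn Φ (Ioi (0:ℝ)) := by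
    intro t ht t' ht' htt
    by_contra h
    push_neg at h
    exact aux_mono d₁ d₂ θ₁ θ₂ g₁₁ g₁₂ g₂₁ g₂₂ c₁ c₂ hd₁ hd₂ hθ₁ hθ₂ hg₁₁ hg₁₂ hg₂₁ hg₂₂ hH1
      ht (hVpos t) ht' (hVpos t') h htt (heq1 t) (heq2 t) (heq1 t') (heq2 t')
  obtain ⟨W₁, hW₁pos, hW₁eq, -, -, -, -⟩ := aux_inv d₁ g₁₁ hd₁ hg₁₁
  obtain ⟨W₂, hW₂pos, hW₂eq, -, -, -, -⟩ := aux_inv d₂ g₂₂ hd₂ hg₂₂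
  have hKca : ∀ t : ℝ, 0 < t → ContinuousAt K t := by
    intro t ht
    rw [hKdef]
    exact (continuousAt_const.add
      (continuousAt_const.mul (Real.continuousAt_log ht.ne'))).add
      (continuousAt_const.mul continuousAt_id)
  have hVca : ∀ t : ℝ, 0 < t → ContinuousAt V t := by
    intro t ht
    exact hW₀cont.continuousAt.comp (hKca t ht)
  have hΦca : ∀ t : ℝ, 0 < t → ContinuousAt Φ t := by
    intro t ht
    rw [hΦdef]
    exact (((continuousAt_const.sub
      (continuousAt_const.mul (Real.continuousAt_log ht.ne'))).sub
      (continuousAt_const.mul continuousAt_id)).sub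
      (continuousAt_const.mul (hVca t ht))).div_const θ₁
  have hsurj : ∀ y : ℝ, ∃ t, 0 < t ∧ Φ t = y := by
    intro y
    set t₂ := W₁ (c₁ - θ₁ * y) with ht₂def
    have ht₂ : 0 < t₂ := hW₁pos _
    have ht₂eq : d₁ * Real.log t₂ + g₁₁ * t₂ = c₁ - θ₁ * y := hW₁eq _
    have hΦt₂ : Φ t₂ ≤ y := by
      rw [hΦdef]
      simp only
      rw [div_le_iff₀ hθ₁]
      have := mul_pos hg₁₂ (hVpos t₂)
      linarith
    set T := W₂ (c₂ - θ₂ * y) with hTdef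
    have hT : 0 < T := hW₂pos _
    have hTeq : d₂ * Real.log T + g₂₂ * T = c₂ - θ₂ * y := hW₂eq _
    set s₀ := (θ₁ * d₂) * Real.log T + (θ₁ * g₂₂ - θ₂ * g₁₂) * T - (θ₁ * c₂ - θ₂ * c₁)
      - (θ₂ * g₁₁ - θ₁ * g₂₁) with hs₀def
    set t₁ := min 1 (Real.exp (s₀ / (θ₂ * d₁))) with ht₁def
    have ht₁pos : 0 < t₁ := lt_min one_pos (Real.exp_pos _)
    have ht₁le1 : t₁ ≤ 1 := min_le_left _ _
    have hθ₂d₁ : θ₂ * d₁ < 0 := mul_neg_of_neg_of_pos hθ₂ hd₁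
    have hlogt₁ : Real.log t₁ ≤ s₀ / (θ₂ * d₁) := by
      have := Real.log_le_log ht₁pos (min_le_right 1 (Real.exp (s₀ / (θ₂ * d₁))))
      rwa [Real.log_exp] at this
    have hs₀le : s₀ ≤ θ₂ * d₁ * Real.log t₁ := by
      rw [le_div_iff_of_neg hθ₂d₁] at hlogt₁
      linarith
    have hKt₁ : (θ₁ * d₂) * Real.log T + (θ₁ * g₂₂ - θ₂ * g₁₂) * T ≤ K t₁ := by
      rw [hKdef]
      simp only
      have hc : θ₂ * g₁₁ - θ₁ * g₂₁ ≤ 0 := by nlinarith [mul_pos hθ₁ hg₂₁]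
      have h5 : (θ₂ * g₁₁ - θ₁ * g₂₁) * 1 ≤ (θ₂ * g₁₁ - θ₁ * g₂₁) * t₁ :=
        mul_le_mul_of_nonpos_left ht₁le1 hc
      linarith
    have hVt₁ : T ≤ V t₁ := by
      have := hW₀mono.monotone hKt₁
      rwa [hW₀left T hT] at this
    have hΦt₁ : y ≤ Φ t₁ := by
      have h6 : d₂ * Real.log T + g₂₂ * T ≤ d₂ * Real.log (V t₁) + g₂₂ * V t₁ := by
        have hl := Real.log_le_log hT hVt₁
        have := mul_le_mul_of_nonneg_left hl hd₂.le
        have := mul_le_mul_of_nonneg_left hVt₁ hg₂₂.le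
        linarith
      have h7 := heq2 t₁
      have h8 : θ₂ * Φ t₁ ≤ θ₂ * y := by
        have := mul_pos hg₂₁ ht₁pos
        linarith
      by_contra hcon
      push_neg at hcon
      nlinarith
    set t₀ := min t₁ t₂ with ht₀def
    have ht₀pos : 0 < t₀ := lt_min ht₁pos ht₂
    have ht₀le : t₀ ≤ t₂ := min_le_right _ _
    have hΦt₀ : y ≤ Φ t₀ := by
      rcases le_total t₁ t₂ with h | h
      · rw [ht₀def, min_eq_left h]; exact hΦt₁
      · rw [ht₀def, min_eq_right h]
        rcases eq_or_lt_of_le h with h' | h'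
        · rw [h']; exact hΦt₁
        · have := hanti (Set.mem_Ioi.2 ht₂) (Set.mem_Ioi.2 ht₁pos) h'
          linarith
    have hcontOn : ContinuousOn Φ (Icc t₀ t₂) :=
      fun x hx => (hΦca x (lt_of_lt_of_le ht₀pos hx.1)).continuousWithinAt
    obtain ⟨t, htmem, hft⟩ := intermediate_value_Icc' ht₀le hcontOn ⟨hΦt₂, hΦt₀⟩
    exact ⟨t, lt_of_lt_of_le ht₀pos htmem.1, hft⟩
  set uu : ℝ → ℝ := fun y => (hsurj y).choose with huudef
  have huupos : ∀ y, 0 < uu y := fun y => (hsurj y).choose_spec.1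
  have huueq : ∀ y, Φ (uu y) = y := fun y => (hsurj y).choose_spec.2
  have huuanti : StrictAnti uu := by
    intro y y' hyy
    rcases lt_trichotomy (uu y') (uu y) with h | h | h
    · exact h
    · exfalso
      have : y' = y := by rw [← huueq y', ← huueq y, h]
      exact hyy.ne' this
    · exfalso
      have := hanti (Set.mem_Ioi.2 (huupos y)) (Set.mem_Ioi.2 (huupos y')) h
      rw [huueq y, huueq y'] at this
      exact absurd this (not_lt.2 hyy.le)
  have huuleft : ∀ t : ℝ, 0 < t → uu (Φ t) = t := by
    intro t ht
    exact hanti.injOn (Set.mem_Ioi.2 (huupos (Φ t))) (Set.mem_Ioi.2 ht) (huueq (Φ t))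
  have huucont : Continuous uu := by
    have hg : Continuous fun x : ℝ => uu (-x) := by
      rw [continuous_iff_continuousAt]
      intro a
      apply StrictMonoOn.continuousAt_of_image_mem_nhds (s := (univ : Set ℝ))
        (fun x _ y _ hxy => huuanti (neg_lt_neg hxy)) univ_mem
      apply mem_of_superset (Ioi_mem_nhds (huupos (-a)))
      rintro t (ht : 0 < t)
      refine ⟨-(Φ t), mem_univ _, ?_⟩
      show uu (-(-(Φ t))) = t
      rw [neg_neg]
      exact huuleft t ht
    have huc : uu = (fun x : ℝ => uu (-x)) ∘ Neg.neg := by funext x; simp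
    rw [huc]
    exact hg.comp continuous_neg
  -- derivative formulas
  set Wd : ℝ → ℝ := fun s => W₀ s / (θ₁ * d₂ + (θ₁ * g₂₂ - θ₂ * g₁₂) * W₀ s) with hWddef
  set Kd : ℝ → ℝ := fun t => θ₂ * d₁ * t⁻¹ + (θ₂ * g₁₁ - θ₁ * g₂₁) with hKddef
  set Vd : ℝ → ℝ := fun t => Wd (K t) * Kd t with hVddef
  set Φd : ℝ → ℝ := fun t => (-(d₁ * t⁻¹) - g₁₁ - g₁₂ * Vd t) / θ₁ with hΦddef
  have hW₀d' : ∀ s : ℝ, HasStrictDerivAt W₀ (Wd s) s := by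
    intro s
    rw [hWddef]
    exact hW₀d s
  have hKd : ∀ t : ℝ, 0 < t → HasStrictDerivAt K (Kd t) t := by
    intro t ht
    rw [hKdef, hKddef]
    have h := ((hasStrictDerivAt_const t (θ₁ * c₂ - θ₂ * c₁)).add
      ((Real.hasStrictDerivAt_log ht.ne').const_mul (θ₂ * d₁))).add
      ((hasStrictDerivAt_id t).const_mul (θ₂ * g₁₁ - θ₁ * g₂₁))
    refine h.congr_deriv ?_
    beta_reduce
    ring
  have hVd : ∀ t : ℝ, 0 < t → HasStrictDerivAt V (Vd t) t := by
    intro t ht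
    have h := (hW₀d' (K t)).comp t (hKd t ht)
    rw [hVddef]
    exact h
  have hΦd : ∀ t : ℝ, 0 < t → HasStrictDerivAt Φ (Φd t) t := by
    intro t ht
    rw [hΦdef, hΦddef]
    have h := ((((hasStrictDerivAt_const t c₁).sub
      ((Real.hasStrictDerivAt_log ht.ne').const_mul d₁)).sub
      ((hasStrictDerivAt_id t).const_mul g₁₁)).sub
      ((hVd t ht).const_mul g₁₂)).div_const θ₁
    refine h.congr_deriv ?_
    beta_reduce
    ring
  have hΦdneg : ∀ t : ℝ, 0 < t → Φd t < 0 := by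
    intro t ht
    have hw : 0 < W₀ (K t) := hW₀pos (K t)
    have hden : 0 < θ₁ * d₂ + (θ₁ * g₂₂ - θ₂ * g₁₂) * W₀ (K t) := by
      nlinarith [mul_pos hq₀ hw]
    have hti : 0 < t⁻¹ := inv_pos.2 ht
    have hkey : 0 < (d₁ * t⁻¹ + g₁₁) * (θ₁ * d₂ + (θ₁ * g₂₂ - θ₂ * g₁₂) * W₀ (K t))
        + g₁₂ * W₀ (K t) * (θ₂ * (d₁ * t⁻¹ + g₁₁) - θ₁ * g₂₁) := by
      nlinarith [mul_nonneg (mul_pos hθ₁ hw).le hH1,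
        mul_pos (mul_pos (mul_pos hθ₁ hw) (mul_pos hd₁ hti)) hg₂₂,
        mul_pos (mul_pos hθ₁ hd₂) (mul_pos hd₁ hti),
        mul_pos (mul_pos hθ₁ hd₂) hg₁₁]
    have h9 : d₁ * t⁻¹ + g₁₁ + g₁₂ * Vd t
        = ((d₁ * t⁻¹ + g₁₁) * (θ₁ * d₂ + (θ₁ * g₂₂ - θ₂ * g₁₂) * W₀ (K t))
          + g₁₂ * W₀ (K t) * (θ₂ * (d₁ * t⁻¹ + g₁₁) - θ₁ * g₂₁))
          / (θ₁ * d₂ + (θ₁ * g₂₂ - θ₂ * g₁₂) * W₀ (K t)) := by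
      rw [hVddef, hWddef, hKddef]
      field_simp
      have hden' : θ₁ * d₂ + W₀ (K t) * (θ₁ * g₂₂ - g₁₂ * θ₂) ≠ 0 := by nlinarith [hden]
      rw [add_div' _ _ _ hden', div_left_inj' hden']
      ring
    have hpos : 0 < d₁ * t⁻¹ + g₁₁ + g₁₂ * Vd t := by
      rw [h9]
      exact div_pos hkey hden
    rw [hΦddef]
    simp only
    apply div_neg_of_neg_of_pos _ hθ₁
    linarith
  have huud : ∀ y : ℝ, HasStrictDerivAt uu ((Φd (uu y))⁻¹) y := by
    intro y
    exact HasStrictDerivAt.of_local_left_inverse huucont.continuousAt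
      (hΦd (uu y) (huupos y)) (hΦdneg (uu y) (huupos y)).ne
      (Eventually.of_forall huueq)
  have hWdc : Continuous Wd := by
    rw [hWddef]
    apply hW₀cont.div (continuous_const.add (continuous_const.mul hW₀cont))
    intro s
    show θ₁ * d₂ + (θ₁ * g₂₂ - θ₂ * g₁₂) * W₀ s ≠ 0
    nlinarith [mul_pos hq₀ (hW₀pos s), hW₀pos s]
  have hKdca : ∀ t : ℝ, 0 < t → ContinuousAt Kd t := by
    intro t ht
    rw [hKddef]
    exact (continuousAt_const.mul (continuousAt_inv₀ ht.ne')).add continuousAt_const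
  have hVdca : ∀ t : ℝ, 0 < t → ContinuousAt Vd t := by
    intro t ht
    rw [hVddef]
    exact (hWdc.continuousAt.comp (hKca t ht)).mul (hKdca t ht)
  have hΦdca : ∀ t : ℝ, 0 < t → ContinuousAt Φd t := by
    intro t ht
    rw [hΦddef]
    exact (((continuousAt_const.mul (continuousAt_inv₀ ht.ne')).neg.sub
      continuousAt_const).sub (continuousAt_const.mul (hVdca t ht))).div_const θ₁
  have huuCD : ContDiff ℝ 1 uu := by
    rw [contDiff_one_iff_deriv]
    refine ⟨fun y => (huud y).hasDerivAt.differentiableAt, ?_⟩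
    have hd : deriv uu = fun y => (Φd (uu y))⁻¹ := funext fun y => (huud y).hasDerivAt.deriv
    rw [hd, continuous_iff_continuousAt]
    intro y
    exact ((hΦdca (uu y) (huupos y)).comp huucont.continuousAt).inv₀
      (hΦdneg (uu y) (huupos y)).ne
  have hvvd : ∀ y : ℝ, HasStrictDerivAt (fun y => V (uu y)) (Vd (uu y) * (Φd (uu y))⁻¹) y :=
    fun y => (hVd (uu y) (huupos y)).comp y (huud y)
  have hvvCD : ContDiff ℝ 1 (fun y => V (uu y)) := by
    rw [contDiff_one_iff_deriv]
    refine ⟨fun y => (hvvd y).hasDerivAt.differentiableAt, ?_⟩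
    have hd : deriv (fun y => V (uu y)) = fun y => Vd (uu y) * (Φd (uu y))⁻¹ :=
      funext fun y => (hvvd y).hasDerivAt.deriv
    rw [hd, continuous_iff_continuousAt]
    intro y
    exact ((hVdca (uu y) (huupos y)).comp huucont.continuousAt).mul
      (((hΦdca (uu y) (huupos y)).comp huucont.continuousAt).inv₀
        (hΦdneg (uu y) (huupos y)).ne)
  refine ⟨uu, fun y => V (uu y), huuCD, hvvCD, ?_⟩
  intro φ
  have h1 := heq1 (uu φ)
  have h2 := heq2 (uu φ)
  rw [huueq φ] at h1 h2
  refine ⟨huupos φ, hVpos (uu φ), h1, h2, ?_⟩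
  intro a b ha hb ea eb
  have hau : a = uu φ := by
    rcases lt_trichotomy a (uu φ) with h | h | h
    · exact (aux_mono d₁ d₂ θ₁ θ₂ g₁₁ g₁₂ g₂₁ g₂₂ c₁ c₂ hd₁ hd₂ hθ₁ hθ₂ hg₁₁ hg₁₂ hg₂₁ hg₂₂
        hH1 ha hb (huupos φ) (hVpos (uu φ)) le_rfl h ea eb h1 h2).elim
    · exact h
    · exact (aux_mono d₁ d₂ θ₁ θ₂ g₁₁ g₁₂ g₂₁ g₂₂ c₁ c₂ hd₁ hd₂ hθ₁ hθ₂ hg₁₁ hg₁₂ hg₂₁ hg₂₂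
        hH1 (huupos φ) (hVpos (uu φ)) ha hb le_rfl h h1 h2 ea eb).elim
  refine ⟨hau, ?_⟩
  have hg : g₁₂ * b = g₁₂ * V (uu φ) := by
    rw [hau] at ea
    linarith
  exact mul_left_cancel₀ hg₁₂.ne' hg
end

section
/- There exists δ > 0 such that for every φ ∈ ℝ and every pair of positive reals (u, v) with (u, v, φ) satisfying the system (AE), one has u ≥ δ or v ≥ δ; i.e. u < δ and v < δ cannot hold simultaneously for any solution of (AE). (Proposition 2.5(i): non-simultaneous vanishing of u and v.) -/
open Filter Real Set Topology

/- Eliminating `φ` through `-θ₂ · (AE₁) + θ₁ · (AE₂)` leaves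
`a log u + b log v + p u + q v = C` with `a, b > 0`. Since `a log u + p u → -∞` as `u → 0⁺`
(and likewise in `v`), the left side falls below `C` once `u` and `v` are both small. -/

theorem tendsto_mul_log_add_mul_nhdsGT_zero_atBot {a : ℝ} (ha : 0 < a) (p : ℝ) :
    Tendsto (fun u => a * log u + p * u) (𝓝[>] 0) atBot := by
  have hlin : Tendsto (fun u => p * u) (𝓝[>] (0 : ℝ)) (𝓝 (p * 0)) :=
    ((continuous_const_mul p).tendsto 0).mono_left nhdsWithin_le_nhds
  exact (tendsto_log_nhdsGT_zero.const_mul_atBot ha).atBot_add hlin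

theorem exists_pos_forall_mul_log_add_mul_lt {a : ℝ} (ha : 0 < a) (p C : ℝ) :
    ∃ δ > 0, ∀ u ∈ Ioo 0 δ, a * log u + p * u < C := by
  have hev : ∀ᶠ u in 𝓝[>] 0, a * log u + p * u < C :=
    (tendsto_mul_log_add_mul_nhdsGT_zero_atBot ha p).eventually (eventually_lt_atBot C)
  obtain ⟨δ, hδ, hsub⟩ := mem_nhdsGT_iff_exists_Ioo_subset.1 hev
  exact ⟨δ, hδ, fun u hu => hsub hu⟩

theorem stmt_4_general (d₁ d₂ θ₁ θ₂ g₁₁ g₁₂ g₂₁ g₂₂ c₁ c₂ : ℝ)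
    (hd₁ : 0 < d₁) (hd₂ : 0 < d₂) (hθ₁ : 0 < θ₁) (hθ₂ : θ₂ < 0) :
    ∃ δ : ℝ, 0 < δ ∧ ∀ φ u v : ℝ, 0 < u → 0 < v →
      d₁ * Real.log u + θ₁ * φ + g₁₁ * u + g₁₂ * v = c₁ →
      d₂ * Real.log v + θ₂ * φ + g₂₁ * u + g₂₂ * v = c₂ →
      δ ≤ u ∨ δ ≤ v := by
  set C := -θ₂ * c₁ + θ₁ * c₂
  obtain ⟨δ₁, hδ₁, hu_small⟩ := exists_pos_forall_mul_log_add_mul_lt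
    (mul_pos (neg_pos.2 hθ₂) hd₁) (-θ₂ * g₁₁ + θ₁ * g₂₁) (C / 2)
  obtain ⟨δ₂, hδ₂, hv_small⟩ := exists_pos_forall_mul_log_add_mul_lt
    (mul_pos hθ₁ hd₂) (-θ₂ * g₁₂ + θ₁ * g₂₂) (C / 2)
  refine ⟨min δ₁ δ₂, lt_min hδ₁ hδ₂, fun φ u v hu hv e₁ e₂ => ?_⟩
  by_contra! h
  have hu' := hu_small u ⟨hu, h.1.trans_le (min_le_left _ _)⟩
  have hv' := hv_small v ⟨hv, h.2.trans_le (min_le_right _ _)⟩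
  have elim : -θ₂ * d₁ * log u + (-θ₂ * g₁₁ + θ₁ * g₂₁) * u
      + (θ₁ * d₂ * log v + (-θ₂ * g₁₂ + θ₁ * g₂₂) * v) = C := by
    linear_combination (-θ₂) * e₁ + θ₁ * e₂
  linarith

/-- Proposition 2.5(i): non-simultaneous vanishing. There is `δ > 0` such that
no positive solution of (AE) can have both `u < δ` and `v < δ`. -/
theorem stmt_4 (d₁ d₂ θ₁ θ₂ g₁₁ g₁₂ g₂₁ g₂₂ c₁ c₂ : ℝ)
    (hd₁ : 0 < d₁) (hd₂ : 0 < d₂) (hθ₁ : 0 < θ₁) (hθ₂ : θ₂ < 0)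
    (hg₁₁ : 0 < g₁₁) (hg₁₂ : 0 < g₁₂) (hg₂₁ : 0 < g₂₁) (hg₂₂ : 0 < g₂₂) :
    ∃ δ : ℝ, 0 < δ ∧ ∀ φ u v : ℝ, 0 < u → 0 < v →
      d₁ * Real.log u + θ₁ * φ + g₁₁ * u + g₁₂ * v = c₁ →
      d₂ * Real.log v + θ₂ * φ + g₂₁ * u + g₂₂ * v = c₂ →
      δ ≤ u ∨ δ ≤ v :=
  stmt_4_general d₁ d₂ θ₁ θ₂ g₁₁ g₁₂ g₂₁ g₂₂ c₁ c₂ hd₁ hd₂ hθ₁ hθ₂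
end

section
/- Assume (H1), and let u, v : ℝ → ℝ be differentiable functions with u(φ) > 0, v(φ) > 0 and (u(φ), v(φ), φ) satisfying the system (AE) for every φ ∈ ℝ. Then for every φ the quantity D(φ) := g₁₂·g₂₁ − (d₁/u(φ) + g₁₁)·(d₂/v(φ) + g₂₂) is strictly negative, and the derivatives satisfy u'(φ) = −(g₁₂·θ₂ − θ₁·(d₂/v(φ) + g₂₂))/D(φ) and v'(φ) = −(g₂₁·θ₁ − θ₂·(d₁/u(φ) + g₁₁))/D(φ); consequently u'(φ) < 0 and v'(φ) > 0 for all φ ∈ ℝ. (Proposition 2.5(ii): derivative formulas and strict monotonicity of the solution branch.) -/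
/-!
Differentiating both equations of (AE) along the branch gives a 2 × 2 linear system for
`(u', v')` whose matrix has diagonal entries `d₁/u + g₁₁ > g₁₁`, `d₂/v + g₂₂ > g₂₂` and
off-diagonal entries `g₁₂`, `g₂₁`. Under (H1) its determinant is therefore positive, so
Cramer's rule gives the formulas, and the signs of `θ₁, θ₂` fix the signs of `u'` and `v'`.
-/

lemma deriv_relation_of_log_linear_const {d θ a b c φ : ℝ} {w z : ℝ → ℝ}
    (hw : DifferentiableAt ℝ w φ) (hz : DifferentiableAt ℝ z φ) (hwφ : w φ ≠ 0)
    (h : ∀ x, d * Real.log (w x) + θ * x + a * w x + b * z x = c) :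
    (d / w φ + a) * deriv w φ + b * deriv z φ = -θ := by
  have hF : HasDerivAt (fun x => d * Real.log (w x) + θ * x + a * w x + b * z x)
      (d * (deriv w φ / w φ) + θ * 1 + a * deriv w φ + b * deriv z φ) φ :=
    ((((hw.hasDerivAt.log hwφ).const_mul d).add ((hasDerivAt_id φ).const_mul θ)).add
      (hw.hasDerivAt.const_mul a)).add (hz.hasDerivAt.const_mul b)
  rw [funext h] at hF
  linear_combination hF.unique (hasDerivAt_const φ c)

lemma cramer_two {a b p q r s x y : ℝ} (hD : p * q - a * b ≠ 0)
    (h₁ : a * x + p * y = -r) (h₂ : b * y + q * x = -s) :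
    x = -((p * s - r * b) / (p * q - a * b)) ∧ y = -((q * r - s * a) / (p * q - a * b)) := by
  constructor
  · rw [← neg_div, eq_div_iff hD]
    linear_combination p * h₂ - b * h₁
  · rw [← neg_div, eq_div_iff hD]
    linear_combination q * h₁ - a * h₂

lemma mul_sub_mul_neg_of_le_of_lt {a b p q g h : ℝ} (hg : 0 ≤ g) (hh : 0 ≤ h)
    (hpq : p * q ≤ g * h) (ha : g < a) (hb : h < b) : p * q - a * b < 0 := by
  nlinarith [mul_lt_mul'' ha hb hg hh]

/-- Proposition 2.5(ii): derivative formulas and strict monotonicity of the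
solution branch `(u(φ), v(φ))` of (AE) under (H1). -/
theorem stmt_5 (d₁ d₂ θ₁ θ₂ g₁₁ g₁₂ g₂₁ g₂₂ c₁ c₂ : ℝ)
    (hd₁ : 0 < d₁) (hd₂ : 0 < d₂) (hθ₁ : 0 < θ₁) (hθ₂ : θ₂ < 0)
    (hg₁₁ : 0 < g₁₁) (hg₁₂ : 0 < g₁₂) (hg₂₁ : 0 < g₂₁) (hg₂₂ : 0 < g₂₂)
    (hH1 : 0 ≤ g₁₁ * g₂₂ - g₁₂ * g₂₁)
    (u v : ℝ → ℝ) (hu : Differentiable ℝ u) (hv : Differentiable ℝ v)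
    (hupos : ∀ φ : ℝ, 0 < u φ) (hvpos : ∀ φ : ℝ, 0 < v φ)
    (hAE1 : ∀ φ : ℝ, d₁ * Real.log (u φ) + θ₁ * φ + g₁₁ * u φ + g₁₂ * v φ = c₁)
    (hAE2 : ∀ φ : ℝ, d₂ * Real.log (v φ) + θ₂ * φ + g₂₁ * u φ + g₂₂ * v φ = c₂) :
    ∀ φ : ℝ,
      g₁₂ * g₂₁ - (d₁ / u φ + g₁₁) * (d₂ / v φ + g₂₂) < 0 ∧
      deriv u φ = -((g₁₂ * θ₂ - θ₁ * (d₂ / v φ + g₂₂)) /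
        (g₁₂ * g₂₁ - (d₁ / u φ + g₁₁) * (d₂ / v φ + g₂₂))) ∧
      deriv v φ = -((g₂₁ * θ₁ - θ₂ * (d₁ / u φ + g₁₁)) /
        (g₁₂ * g₂₁ - (d₁ / u φ + g₁₁) * (d₂ / v φ + g₂₂))) ∧
      deriv u φ < 0 ∧ 0 < deriv v φ := by
  intro φ
  have ha : g₁₁ < d₁ / u φ + g₁₁ := lt_add_of_pos_left _ (div_pos hd₁ (hupos φ))
  have hb : g₂₂ < d₂ / v φ + g₂₂ := lt_add_of_pos_left _ (div_pos hd₂ (hvpos φ))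
  have hD := mul_sub_mul_neg_of_le_of_lt (p := g₁₂) (q := g₂₁) hg₁₁.le hg₂₂.le
    (by linarith) ha hb
  have E₁ := deriv_relation_of_log_linear_const (hu φ) (hv φ) (hupos φ).ne' hAE1
  have hAE2' (x : ℝ) : d₂ * Real.log (v x) + θ₂ * x + g₂₂ * v x + g₂₁ * u x = c₂ := by
    linarith [hAE2 x]
  have E₂ := deriv_relation_of_log_linear_const (hv φ) (hu φ) (hvpos φ).ne' hAE2'
  obtain ⟨hu', hv'⟩ := cramer_two hD.ne E₁ E₂
  refine ⟨hD, hu', hv', ?_, ?_⟩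
  · rw [hu']
    exact neg_neg_of_pos (div_pos_of_neg_of_neg (by nlinarith) hD)
  · rw [hv']
    exact neg_pos_of_neg (div_neg_of_pos_of_neg (by nlinarith) hD)
end

section
/- Assume (H1), fix γ₁ > 0 and γ₂ < 0, and let u, v : ℝ → ℝ be differentiable functions with u(φ) > 0, v(φ) > 0 and (u(φ), v(φ), φ) satisfying the system (AE) for every φ ∈ ℝ. Then there exist constants M > 0 and k > 0 such that for every φ ∈ ℝ: |u'(φ)| ≤ M, |v'(φ)| ≤ M, and γ₁·u'(φ) + γ₂·v'(φ) ≤ −k. (Proposition 2.5(ii): uniform boundedness of the derivatives and the uniform negative bound on γ₁·u' + γ₂·v'.) -/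
/-!
Differentiating (AE) gives, with `a = d₁/u` and `b = d₂/v`, the linear system
`(a + g₁₁) u' + g₁₂ v' = -θ₁`, `g₂₁ u' + (b + g₂₂) v' = -θ₂`. In the unknowns `(-u', v')` its
matrix is, under (H1), an M-matrix with determinant `Δ ≥ a g₂₂ + b g₁₁`, so Cramer's rule gives
`u' < 0 < v'`, and `|u'|, |v'|` are bounded once `Δ` is bounded away from `0`, i.e. once `u` and
`v` are not both large. Eliminating `φ` from (AE) yields a conserved quantity
`-θ₂ (d₁ log u + g₁₁ u + g₁₂ v) + θ₁ (d₂ log v + g₂₁ u + g₂₂ v)`, which tends to `+∞` when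
`u, v → ∞` and to `-∞` when `u, v → 0`; so `u` and `v` are neither both large nor both small.
The second fact bounds `a` or `b` from above, hence `-u' ≥ θ₁/(a + g₁₁)` or
`v' ≥ -θ₂/(b + g₂₂)` is bounded below, and `γ₁ u' + γ₂ v'` is at most `γ₁ u'` and `γ₂ v'`.
-/

open Real

section ConservedQuantity

variable {A B α β C x y : ℝ}

theorem le_max_or_le_one_of_log_eq (hA : 0 ≤ A) (hB : 0 ≤ B) (hα : 0 < α) (hβ : 0 ≤ β)
    (hy : 0 < y) (h : A * log x + B * log y + α * x + β * y = C) :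
    x ≤ max 1 (C / α) ∨ y ≤ 1 := by
  refine or_iff_not_imp_right.2 fun hy1 => ?_
  rcases le_or_gt x 1 with hx1 | hx1
  · exact hx1.trans (le_max_left _ _)
  · refine ((le_div_iff₀' hα).2 ?_).trans (le_max_right _ _)
    nlinarith [mul_nonneg hA (log_pos hx1).le, mul_nonneg hB (log_pos (not_le.1 hy1)).le,
      mul_nonneg hβ hy.le]

theorem min_le_or_one_le_of_log_eq (hA : 0 < A) (hB : 0 ≤ B) (hα : 0 ≤ α) (hβ : 0 ≤ β)
    (hx : 0 < x) (hy : 0 < y) (h : A * log x + B * log y + α * x + β * y = C) :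
    min 1 (exp ((C - α - β) / A)) ≤ x ∨ 1 ≤ y := by
  refine or_iff_not_imp_right.2 fun hy1 => ?_
  rcases le_or_gt 1 x with hx1 | hx1
  · exact (min_le_left _ _).trans hx1
  · refine (min_le_right _ _).trans ?_
    rw [← exp_log hx, exp_le_exp, div_le_iff₀' hA]
    nlinarith [mul_nonpos_of_nonneg_of_nonpos hB (log_nonpos hy.le (not_le.1 hy1).le),
      mul_le_mul_of_nonneg_left hx1.le hα, mul_le_mul_of_nonneg_left (not_le.1 hy1).le hβ]

end ConservedQuantity

section MMatrix

variable {a b p q r t s w m K X Y : ℝ}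

theorem pos_of_mMatrix_system (ha : 0 < a) (hb : 0 < b) (hp : 0 ≤ p) (hq : 0 ≤ q) (hr : 0 ≤ r)
    (hs : 0 < s) (hw : 0 ≤ w) (hdet : q * t ≤ p * r)
    (e₁ : (a + p) * X - q * Y = s) (e₂ : (b + r) * Y - t * X = w) : 0 < X := by
  have hcramer : ((a + p) * (b + r) - q * t) * X = s * (b + r) + q * w := by
    linear_combination (b + r) * e₁ + q * e₂
  have hΔ : 0 < (a + p) * (b + r) - q * t := by
    nlinarith [mul_pos ha hb, mul_nonneg ha.le hr, mul_nonneg hb.le hp]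
  exact pos_of_mul_pos_right (hcramer ▸ by positivity) hΔ.le

theorem le_of_mMatrix_system (ha : 0 ≤ a) (hb : 0 ≤ b) (hp : 0 < p) (hq : 0 ≤ q) (hr : 0 < r)
    (hs : 0 ≤ s) (hw : 0 ≤ w) (hdet : q * t ≤ p * r) (hm : 0 < m) (hab : m ≤ a ∨ m ≤ b)
    (e₁ : (a + p) * X - q * Y = s) (e₂ : (b + r) * Y - t * X = w) :
    X ≤ s / p + (s * r + q * w) / (m * min p r) := by
  set Δ := (a + p) * (b + r) - q * t
  have hcramer : Δ * X = s * b + (s * r + q * w) := by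
    linear_combination (b + r) * e₁ + q * e₂
  have hΔb : b * p ≤ Δ := by nlinarith [mul_nonneg ha hb, mul_nonneg ha hr.le]
  have hΔm : m * min p r ≤ Δ := by
    rcases hab with h | h
    · nlinarith [mul_le_mul_of_nonneg_left (min_le_right p r) hm.le,
        mul_le_mul_of_nonneg_right h hr.le, mul_nonneg ha hb, mul_nonneg hb hp.le]
    · nlinarith [mul_le_mul_of_nonneg_left (min_le_left p r) hm.le,
        mul_le_mul_of_nonneg_right h hp.le, mul_nonneg ha hb, mul_nonneg ha hr.le]
  have hc : 0 < m * min p r := mul_pos hm (lt_min hp hr)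
  have hN : 0 ≤ s * r + q * w := by positivity
  refine le_of_mul_le_mul_left ?_ (hc.trans_le hΔm)
  rw [hcramer, mul_add, mul_div_assoc', mul_div_assoc']
  gcongr ?_ + ?_
  · rw [le_div_iff₀ hp]; nlinarith [mul_le_mul_of_nonneg_left hΔb hs]
  · rw [le_div_iff₀ hc]; nlinarith [mul_le_mul_of_nonneg_left hΔm hN]

theorem div_le_of_add_mul_sub_mul_eq (hq : 0 ≤ q) (hX : 0 ≤ X) (hY : 0 ≤ Y) (hKp : 0 < K + p)
    (haK : a ≤ K) (e : (a + p) * X - q * Y = s) : s / (K + p) ≤ X := by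
  rw [div_le_iff₀ hKp]
  nlinarith [mul_nonneg hq hY, mul_le_mul_of_nonneg_right haK hX]

end MMatrix

theorem linearization_of_forall_eq {d θ g h c φ : ℝ} {u v : ℝ → ℝ}
    (hu : DifferentiableAt ℝ u φ) (hv : DifferentiableAt ℝ v φ) (hu₀ : u φ ≠ 0)
    (hAE : ∀ ψ, d * log (u ψ) + θ * ψ + g * u ψ + h * v ψ = c) :
    (d / u φ + g) * deriv u φ + h * deriv v φ = -θ := by
  have H := ((((hu.hasDerivAt.log hu₀).const_mul d).add ((hasDerivAt_id' φ).const_mul θ)).add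
    (hu.hasDerivAt.const_mul g)).add (hv.hasDerivAt.const_mul h)
  have H₀ := (hasDerivAt_const φ c).congr_of_eventuallyEq (Filter.Eventually.of_forall hAE)
  linear_combination H.unique H₀

section AlgebraicSystem

variable {d₁ d₂ θ₁ θ₂ g₁₁ g₁₂ g₂₁ g₂₂ c₁ c₂ : ℝ} {u v : ℝ → ℝ}

theorem conserved_quantity_eq
    (hAE1 : ∀ φ : ℝ, d₁ * log (u φ) + θ₁ * φ + g₁₁ * u φ + g₁₂ * v φ = c₁)
    (hAE2 : ∀ φ : ℝ, d₂ * log (v φ) + θ₂ * φ + g₂₁ * u φ + g₂₂ * v φ = c₂) (φ : ℝ) :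
    -θ₂ * d₁ * log (u φ) + θ₁ * d₂ * log (v φ) + (-θ₂ * g₁₁ + θ₁ * g₂₁) * u φ
      + (-θ₂ * g₁₂ + θ₁ * g₂₂) * v φ = -θ₂ * c₁ + θ₁ * c₂ := by
  linear_combination -θ₂ * hAE1 φ + θ₁ * hAE2 φ

theorem exists_pos_forall_le_div_or_le_div (hd₁ : 0 < d₁) (hd₂ : 0 < d₂) (hθ₁ : 0 < θ₁)
    (hθ₂ : θ₂ < 0) (hg₁₁ : 0 < g₁₁) (hg₁₂ : 0 < g₁₂) (hg₂₁ : 0 < g₂₁) (hg₂₂ : 0 < g₂₂)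
    (hupos : ∀ φ, 0 < u φ) (hvpos : ∀ φ, 0 < v φ)
    (hAE1 : ∀ φ : ℝ, d₁ * log (u φ) + θ₁ * φ + g₁₁ * u φ + g₁₂ * v φ = c₁)
    (hAE2 : ∀ φ : ℝ, d₂ * log (v φ) + θ₂ * φ + g₂₁ * u φ + g₂₂ * v φ = c₂) :
    ∃ m > 0, ∀ φ, m ≤ d₁ / u φ ∨ m ≤ d₂ / v φ := by
  have hθ₂' : 0 < -θ₂ := neg_pos.2 hθ₂
  refine ⟨min (d₁ / max 1 ((-θ₂ * c₁ + θ₁ * c₂) / (-θ₂ * g₁₁ + θ₁ * g₂₁))) d₂, by positivity,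
    fun φ => ?_⟩
  refine (le_max_or_le_one_of_log_eq (by positivity) (by positivity) (by positivity)
    (by positivity) (hvpos φ) (conserved_quantity_eq hAE1 hAE2 φ)).imp (fun h => ?_) (fun h => ?_)
  · exact (min_le_left _ _).trans (div_le_div_of_nonneg_left hd₁.le (hupos φ) h)
  · exact (min_le_right _ _).trans ((le_div_iff₀ (hvpos φ)).2 (by nlinarith))

theorem exists_pos_forall_div_le_or_div_le (hd₁ : 0 < d₁) (hd₂ : 0 < d₂) (hθ₁ : 0 < θ₁)
    (hθ₂ : θ₂ < 0) (hg₁₁ : 0 < g₁₁) (hg₁₂ : 0 < g₁₂) (hg₂₁ : 0 < g₂₁) (hg₂₂ : 0 < g₂₂)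
    (hupos : ∀ φ, 0 < u φ) (hvpos : ∀ φ, 0 < v φ)
    (hAE1 : ∀ φ : ℝ, d₁ * log (u φ) + θ₁ * φ + g₁₁ * u φ + g₁₂ * v φ = c₁)
    (hAE2 : ∀ φ : ℝ, d₂ * log (v φ) + θ₂ * φ + g₂₁ * u φ + g₂₂ * v φ = c₂) :
    ∃ K > 0, ∀ φ, d₁ / u φ ≤ K ∨ d₂ / v φ ≤ K := by
  have hθ₂' : 0 < -θ₂ := neg_pos.2 hθ₂
  refine ⟨max (d₁ / min 1 (exp ((-θ₂ * c₁ + θ₁ * c₂ - (-θ₂ * g₁₁ + θ₁ * g₂₁)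
    - (-θ₂ * g₁₂ + θ₁ * g₂₂)) / (-θ₂ * d₁)))) d₂, by positivity, fun φ => ?_⟩
  refine (min_le_or_one_le_of_log_eq (by positivity) (by positivity) (by positivity)
    (by positivity) (hupos φ) (hvpos φ) (conserved_quantity_eq hAE1 hAE2 φ)).imp
    (fun h => ?_) (fun h => ?_)
  · exact (div_le_div_of_nonneg_left hd₁.le (by positivity) h).trans (le_max_left _ _)
  · exact ((div_le_iff₀ (hvpos φ)).2 (by nlinarith)).trans (le_max_right _ _)

theorem mMatrix_system_of_forall_eq {φ : ℝ} (hu : DifferentiableAt ℝ u φ)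
    (hv : DifferentiableAt ℝ v φ) (hu₀ : 0 < u φ) (hv₀ : 0 < v φ)
    (hAE1 : ∀ φ : ℝ, d₁ * log (u φ) + θ₁ * φ + g₁₁ * u φ + g₁₂ * v φ = c₁)
    (hAE2 : ∀ φ : ℝ, d₂ * log (v φ) + θ₂ * φ + g₂₁ * u φ + g₂₂ * v φ = c₂) :
    (d₁ / u φ + g₁₁) * -deriv u φ - g₁₂ * deriv v φ = θ₁ ∧
      (d₂ / v φ + g₂₂) * deriv v φ - g₂₁ * -deriv u φ = -θ₂ := by
  constructor
  · linear_combination -linearization_of_forall_eq hu hv hu₀.ne' hAE1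
  · linear_combination linearization_of_forall_eq hv hu hv₀.ne'
      fun ψ => (add_right_comm _ _ _).trans (hAE2 ψ)

end AlgebraicSystem

/-- Proposition 2.5(ii): uniform boundedness of `u'`, `v'` and the uniform
negative upper bound on `γ₁·u' + γ₂·v'` along the solution branch of (AE)
under (H1). -/
theorem stmt_6 (d₁ d₂ θ₁ θ₂ g₁₁ g₁₂ g₂₁ g₂₂ c₁ c₂ γ₁ γ₂ : ℝ)
    (hd₁ : 0 < d₁) (hd₂ : 0 < d₂) (hθ₁ : 0 < θ₁) (hθ₂ : θ₂ < 0)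
    (hg₁₁ : 0 < g₁₁) (hg₁₂ : 0 < g₁₂) (hg₂₁ : 0 < g₂₁) (hg₂₂ : 0 < g₂₂)
    (hH1 : 0 ≤ g₁₁ * g₂₂ - g₁₂ * g₂₁)
    (hγ₁ : 0 < γ₁) (hγ₂ : γ₂ < 0)
    (u v : ℝ → ℝ) (hu : Differentiable ℝ u) (hv : Differentiable ℝ v)
    (hupos : ∀ φ : ℝ, 0 < u φ) (hvpos : ∀ φ : ℝ, 0 < v φ)
    (hAE1 : ∀ φ : ℝ, d₁ * Real.log (u φ) + θ₁ * φ + g₁₁ * u φ + g₁₂ * v φ = c₁)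
    (hAE2 : ∀ φ : ℝ, d₂ * Real.log (v φ) + θ₂ * φ + g₂₁ * u φ + g₂₂ * v φ = c₂) :
    ∃ M k : ℝ, 0 < M ∧ 0 < k ∧ ∀ φ : ℝ,
      |deriv u φ| ≤ M ∧ |deriv v φ| ≤ M ∧
      γ₁ * deriv u φ + γ₂ * deriv v φ ≤ -k := by
  obtain ⟨m, hm, hlarge⟩ :=
    exists_pos_forall_le_div_or_le_div hd₁ hd₂ hθ₁ hθ₂ hg₁₁ hg₁₂ hg₂₁ hg₂₂ hupos hvpos
      hAE1 hAE2
  obtain ⟨K, hK, hsmall⟩ :=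
    exists_pos_forall_div_le_or_div_le hd₁ hd₂ hθ₁ hθ₂ hg₁₁ hg₁₂ hg₂₁ hg₂₂ hupos hvpos
      hAE1 hAE2
  have hθ₂' : 0 < -θ₂ := neg_pos.2 hθ₂
  have hγ₂' : 0 < -γ₂ := neg_pos.2 hγ₂
  refine ⟨max (θ₁ / g₁₁ + (θ₁ * g₂₂ + g₁₂ * -θ₂) / (m * min g₁₁ g₂₂))
      (-θ₂ / g₂₂ + (-θ₂ * g₁₁ + g₂₁ * θ₁) / (m * min g₂₂ g₁₁)),
    min (γ₁ * (θ₁ / (K + g₁₁))) (-γ₂ * (-θ₂ / (K + g₂₂))), by positivity, by positivity,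
    fun φ => ?_⟩
  obtain ⟨e₁, e₂⟩ := mMatrix_system_of_forall_eq (hu φ) (hv φ) (hupos φ) (hvpos φ) hAE1 hAE2
  have ha : 0 < d₁ / u φ := div_pos hd₁ (hupos φ)
  have hb : 0 < d₂ / v φ := div_pos hd₂ (hvpos φ)
  have hX := pos_of_mMatrix_system ha hb hg₁₁.le hg₁₂.le hg₂₂.le hθ₁ hθ₂'.le (by linarith) e₁ e₂
  have hY := pos_of_mMatrix_system hb ha hg₂₂.le hg₂₁.le hg₁₁.le hθ₂' hθ₁.le (by linarith) e₂ e₁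
  refine ⟨?_, ?_, ?_⟩
  · rw [abs_of_neg (neg_pos.1 hX)]
    exact (le_of_mMatrix_system ha.le hb.le hg₁₁ hg₁₂.le hg₂₂ hθ₁.le hθ₂'.le (by linarith) hm
      (hlarge φ) e₁ e₂).trans (le_max_left _ _)
  · rw [abs_of_pos hY]
    exact (le_of_mMatrix_system hb.le ha.le hg₂₂ hg₂₁.le hg₁₁ hθ₂'.le hθ₁.le (by linarith) hm
      (hlarge φ).symm e₂ e₁).trans (le_max_right _ _)
  · rcases hsmall φ with h | h
    · have hX₀ := div_le_of_add_mul_sub_mul_eq hg₁₂.le hX.le hY.le (by positivity) h e₁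
      linarith [min_le_left (γ₁ * (θ₁ / (K + g₁₁))) (-γ₂ * (-θ₂ / (K + g₂₂))),
        mul_le_mul_of_nonneg_left hX₀ hγ₁.le, mul_pos hγ₂' hY]
    · have hY₀ := div_le_of_add_mul_sub_mul_eq hg₂₁.le hY.le hX.le (by positivity) h e₂
      linarith [min_le_right (γ₁ * (θ₁ / (K + g₁₁))) (-γ₂ * (-θ₂ / (K + g₂₂))),
        mul_le_mul_of_nonneg_left hY₀ hγ₂'.le, mul_pos hγ₁ hX]
end

section
/- Suppose w : (0, ∞) → ℝ is twice differentiable with w(v) > 0 for all v > 0, and satisfies d₁·θ₂·log w(v) − d₂·θ₁·log v + (g₁₁·θ₂ − g₂₁·θ₁)·w(v) + (g₁₂·θ₂ − g₂₂·θ₁)·v = θ₂·c₁ − θ₁·c₂ for all v > 0 (the relation obtained from (AE) by eliminating φ). Then for every v > 0: w'(v) = w(v)·(d₂·θ₁ + g₂₂·θ₁·v − g₁₂·θ₂·v)/(v·(d₁·θ₂ + g₁₁·θ₂·w(v) − g₂₁·θ₁·w(v))) < 0, and w''(v) = (d₁·θ₂·v²·w'(v)² − d₂·θ₁·w(v)²)/(v²·w(v)·(d₁·θ₂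 + g₁₁·θ₂·w(v) − g₂₁·θ₁·w(v))) > 0. (Proposition 2.5(iii): monotonicity and convexity of u as a function of v.) -/
/-!
Differentiating the relation `a log w - b log v + A w + B v = C` gives
`w' v (a + A w) = w (b - B v)`; differentiating once more and eliminating `w'` with the first
identity leaves `w'' v² w (a + A w) = a v² w'² - b w²`. For (AE) one has `a, A, B < 0 < b`,
so `a + A w < 0 < b - B v` and `a v² w'² - b w² < 0`, which fixes both signs.
-/

open Filter Topology Set

theorem HasDerivAt.eq_zero_of_eventuallyEq_const {𝕜 F : Type*} [NontriviallyNormedField 𝕜]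
    [NormedAddCommGroup F] [NormedSpace 𝕜 F] {f : 𝕜 → F} {f' : F} {x : 𝕜} {c : F}
    (hf : HasDerivAt f f' x) (h : f =ᶠ[𝓝 x] fun _ => c) : f' = 0 :=
  hf.unique ((hasDerivAt_const x c).congr_of_eventuallyEq h)

section LogRelation

variable {a b A B C : ℝ} {w : ℝ → ℝ}

theorem deriv_mul_eq_of_log_relation
    (hrel : ∀ v, 0 < v → a * Real.log (w v) - b * Real.log v + A * w v + B * v = C)
    {x : ℝ} (hx : 0 < x) (hwx : w x ≠ 0) (hw : DifferentiableAt ℝ w x) :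
    deriv w x * (x * (a + A * w x)) = w x * (b - B * x) := by
  have hderiv := ((((hw.hasDerivAt.log hwx).const_mul a).sub
    ((Real.hasDerivAt_log hx.ne').const_mul b)).add (hw.hasDerivAt.const_mul A)).add
    ((hasDerivAt_id x).const_mul B)
  have hzero := hderiv.eq_zero_of_eventuallyEq_const (c := C)
    (eventually_of_mem (Ioi_mem_nhds hx) hrel)
  field_simp at hzero
  linear_combination hzero

theorem deriv_deriv_mul_eq_of_log_relation
    (hrel : ∀ v, 0 < v → a * Real.log (w v) - b * Real.log v + A * w v + B * v = C)
    (hpos : ∀ v, 0 < v → 0 < w v) (hdiff : ∀ v, 0 < v → DifferentiableAt ℝ w v)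
    {x : ℝ} (hx : 0 < x) (hdiff2 : DifferentiableAt ℝ (deriv w) x) :
    deriv (deriv w) x * (x ^ 2 * w x * (a + A * w x)) =
      a * x ^ 2 * deriv w x ^ 2 - b * w x ^ 2 := by
  have hfirst : ∀ v, 0 < v → deriv w v * (v * (a + A * w v)) - w v * (b - B * v) = 0 :=
    fun v hv => sub_eq_zero.2 <|
      deriv_mul_eq_of_log_relation hrel hv (hpos v hv).ne' (hdiff v hv)
  have hw := (hdiff x hx).hasDerivAt
  have hderiv := (hdiff2.hasDerivAt.mul ((hasDerivAt_id x).mul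
    ((hasDerivAt_const x a).add (hw.const_mul A)))).sub
    (hw.mul ((hasDerivAt_const x b).sub ((hasDerivAt_id x).const_mul B)))
  have hzero := hderiv.eq_zero_of_eventuallyEq_const (c := 0)
    (eventually_of_mem (Ioi_mem_nhds hx) hfirst)
  simp only [Pi.mul_apply, Pi.add_apply, Pi.sub_apply, id, one_mul, zero_add, zero_sub,
    mul_one] at hzero
  -- multiply the differentiated identity by `x w` and use the first identity twice
  linear_combination x * w x * hzero - (x * deriv w x + w x) * hfirst x hx

theorem deriv_eq_div_of_log_relation (ha : a < 0) (hb : 0 < b) (hA : A ≤ 0) (hB : B ≤ 0)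
    (hrel : ∀ v, 0 < v → a * Real.log (w v) - b * Real.log v + A * w v + B * v = C)
    {x : ℝ} (hx : 0 < x) (hwx : 0 < w x) (hw : DifferentiableAt ℝ w x) :
    deriv w x = w x * (b - B * x) / (x * (a + A * w x)) ∧ deriv w x < 0 := by
  have hden : x * (a + A * w x) < 0 := mul_neg_of_pos_of_neg hx (by nlinarith)
  have hnum : 0 < w x * (b - B * x) := mul_pos hwx (by nlinarith)
  have hw' : deriv w x = w x * (b - B * x) / (x * (a + A * w x)) :=
    (eq_div_iff hden.ne).2 (deriv_mul_eq_of_log_relation hrel hx hwx.ne' hw)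
  exact ⟨hw', hw' ▸ div_neg_of_pos_of_neg hnum hden⟩

theorem deriv_deriv_eq_div_of_log_relation (ha : a < 0) (hb : 0 < b) (hA : A ≤ 0)
    (hrel : ∀ v, 0 < v → a * Real.log (w v) - b * Real.log v + A * w v + B * v = C)
    (hpos : ∀ v, 0 < v → 0 < w v) (hdiff : ∀ v, 0 < v → DifferentiableAt ℝ w v)
    {x : ℝ} (hx : 0 < x) (hdiff2 : DifferentiableAt ℝ (deriv w) x) :
    deriv (deriv w) x =
        (a * x ^ 2 * deriv w x ^ 2 - b * w x ^ 2) / (x ^ 2 * w x * (a + A * w x)) ∧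
      0 < deriv (deriv w) x := by
  have hwx := hpos x hx
  have hden : x ^ 2 * w x * (a + A * w x) < 0 :=
    mul_neg_of_pos_of_neg (by positivity) (by nlinarith)
  have hnum : a * x ^ 2 * deriv w x ^ 2 - b * w x ^ 2 < 0 := by
    nlinarith [sq_nonneg (x * deriv w x), mul_pos hb (pow_pos hwx 2)]
  have hw'' := (eq_div_iff hden.ne).2
    (deriv_deriv_mul_eq_of_log_relation hrel hpos hdiff hx hdiff2)
  exact ⟨hw'', hw''.symm ▸ div_pos_of_neg_of_neg hnum hden⟩

end LogRelation

/-- Proposition 2.5(iii): monotonicity and convexity of `u` as a function of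
`v` along the φ-eliminated relation obtained from (AE). -/
theorem stmt_7 (d₁ d₂ θ₁ θ₂ g₁₁ g₁₂ g₂₁ g₂₂ c₁ c₂ : ℝ)
    (hd₁ : 0 < d₁) (hd₂ : 0 < d₂) (hθ₁ : 0 < θ₁) (hθ₂ : θ₂ < 0)
    (hg₁₁ : 0 < g₁₁) (hg₁₂ : 0 < g₁₂) (hg₂₁ : 0 < g₂₁) (hg₂₂ : 0 < g₂₂)
    (w : ℝ → ℝ)
    (hdiff : ∀ v : ℝ, 0 < v → DifferentiableAt ℝ w v)
    (hdiff2 : ∀ v : ℝ, 0 < v → DifferentiableAt ℝ (deriv w) v)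
    (hpos : ∀ v : ℝ, 0 < v → 0 < w v)
    (hrel : ∀ v : ℝ, 0 < v →
      d₁ * θ₂ * Real.log (w v) - d₂ * θ₁ * Real.log v +
        (g₁₁ * θ₂ - g₂₁ * θ₁) * w v + (g₁₂ * θ₂ - g₂₂ * θ₁) * v = θ₂ * c₁ - θ₁ * c₂) :
    ∀ v : ℝ, 0 < v →
      (deriv w v = w v * (d₂ * θ₁ + g₂₂ * θ₁ * v - g₁₂ * θ₂ * v) /
          (v * (d₁ * θ₂ + g₁₁ * θ₂ * w v - g₂₁ * θ₁ * w v)) ∧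
        deriv w v < 0) ∧
      (deriv (deriv w) v =
          (d₁ * θ₂ * v ^ 2 * (deriv w v) ^ 2 - d₂ * θ₁ * (w v) ^ 2) /
            (v ^ 2 * w v * (d₁ * θ₂ + g₁₁ * θ₂ * w v - g₂₁ * θ₁ * w v)) ∧
        0 < deriv (deriv w) v) := by
  intro v hv
  have ha : d₁ * θ₂ < 0 := mul_neg_of_pos_of_neg hd₁ hθ₂
  have hb : 0 < d₂ * θ₁ := mul_pos hd₂ hθ₁
  have hA : g₁₁ * θ₂ - g₂₁ * θ₁ ≤ 0 := by nlinarith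
  have hB : g₁₂ * θ₂ - g₂₂ * θ₁ ≤ 0 := by nlinarith
  obtain ⟨hw', hw'_neg⟩ :=
    deriv_eq_div_of_log_relation ha hb hA hB hrel hv (hpos v hv) (hdiff v hv)
  obtain ⟨hw'', hw''_pos⟩ :=
    deriv_deriv_eq_div_of_log_relation ha hb hA hrel hpos hdiff hv (hdiff2 v hv)
  refine ⟨⟨hw'.trans ?_, hw'_neg⟩, hw''.trans ?_, hw''_pos⟩ <;> ring_nf
end

section
/- Assume (H2), i.e. g₁₁·g₂₂ − g₁₂·g₂₁ < 0, with d₁, d₂ > 0 and g₁₁, g₁₂, g₂₁, g₂₂ > 0. Set k₃ = g₁₁·(g₁₁·g₂₂ − g₁₂·g₂₁)², k₂ = d₁·(g₁₂·g₂₁ − 3·g₁₁·g₂₂)·(g₁₂·g₂₁ − g₁₁·g₂₂), k₁ = −d₁·(d₂·g₂₁·g₁₂² + 2·d₁·g₂₁·g₂₂·g₁₂ − 3·d₁·g₁₁·g₂₂²), k₀ = d₁³·g₂₂², and let p(u) = k₃·u³ + k₂·u² + k₁·u + k₀. Then, with A = k₂² − 3·k₁·k₃, B = k₁·k₂ − 9·k₀·k₃,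 C = k₁² − 3·k₀·k₂, the Shengjin discriminant B² − 4·A·C is strictly negative; consequently p has three distinct real roots u₃ < u₂ < u₁, and these satisfy u₃ < 0 < u₂ ≤ u⋆ < u₁, where u⋆ = d₁·g₂₂/(g₁₂·g₂₁ − g₁₁·g₂₂) > 0. -/
/-!
The Shengjin discriminant factors as `-3 d₁³ d₂ g₁₂⁴ g₂₁² (g₁₂g₂₁ - g₁₁g₂₂)² · E`, where `E` is a
binary quadratic form in `(d₂, d₁)`. With `x = g₁₂g₂₁ > y = g₁₁g₂₂`, the middle coefficient of `E`
is positive when `x ≥ 9y`, and otherwise the discriminant of `E` is `-(x - y)(9y - x)³ < 0`;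
either way `E > 0`. For the roots, `p(0) = k₀ > 0`, `p(u⋆) < 0` and `k₃ > 0`, so the intermediate
value theorem gives a root in each of `(-∞, 0)`, `(0, u⋆)` and `(u⋆, ∞)`.
-/

def cubic (k₃ k₂ k₁ k₀ u : ℝ) : ℝ := k₃ * u ^ 3 + k₂ * u ^ 2 + k₁ * u + k₀

theorem continuous_cubic (k₃ k₂ k₁ k₀ : ℝ) : Continuous (cubic k₃ k₂ k₁ k₀) := by
  unfold cubic; fun_prop

theorem cubic_pos_of_cauchyBound_le {k₃ k₂ k₁ k₀ u : ℝ} (hk₃ : 0 < k₃)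
    (hu : 1 + (|k₂| + |k₁| + |k₀|) / k₃ ≤ u) : 0 < cubic k₃ k₂ k₁ k₀ u := by
  have hS : 0 ≤ (|k₂| + |k₁| + |k₀|) / k₃ := by positivity
  have hu1 : 1 ≤ u := by linarith
  have hlead : k₃ + |k₂| + |k₁| + |k₀| ≤ k₃ * u := by
    have := mul_le_mul_of_nonneg_left hu hk₃.le
    rwa [mul_add, mul_one, mul_div_cancel₀ _ hk₃.ne', ← add_assoc, ← add_assoc] at this
  have hu2 : u ≤ u ^ 2 := by nlinarith
  have hlow : -((|k₂| + |k₁| + |k₀|) * u ^ 2) ≤ k₂ * u ^ 2 + k₁ * u + k₀ := by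
    nlinarith [neg_abs_le k₂, neg_abs_le k₁, neg_abs_le k₀, abs_nonneg k₁, abs_nonneg k₀,
      mul_le_mul_of_nonneg_left hu2 (abs_nonneg k₁),
      mul_le_mul_of_nonneg_left (hu1.trans hu2) (abs_nonneg k₀)]
  unfold cubic
  nlinarith [mul_le_mul_of_nonneg_right hlead (sq_nonneg u)]

theorem cubic_neg_of_le_neg_cauchyBound {k₃ k₂ k₁ k₀ u : ℝ} (hk₃ : 0 < k₃)
    (hu : u ≤ -(1 + (|k₂| + |k₁| + |k₀|) / k₃)) : cubic k₃ k₂ k₁ k₀ u < 0 := by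
  have h := cubic_pos_of_cauchyBound_le (k₂ := -k₂) (k₁ := k₁) (k₀ := -k₀) hk₃
    (u := -u) (by rw [abs_neg, abs_neg]; linarith)
  unfold cubic at h ⊢
  linarith [show k₃ * (-u) ^ 3 + -k₂ * (-u) ^ 2 + k₁ * (-u) + -k₀
    = -(k₃ * u ^ 3 + k₂ * u ^ 2 + k₁ * u + k₀) by ring]

theorem exists_roots_of_cubic_neg {k₃ k₂ k₁ k₀ c : ℝ} (hk₃ : 0 < k₃) (hk₀ : 0 < k₀)
    (hc : 0 < c) (hpc : cubic k₃ k₂ k₁ k₀ c < 0) :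
    ∃ u₃ u₂ u₁ : ℝ, u₃ < 0 ∧ 0 < u₂ ∧ u₂ < c ∧ c < u₁ ∧
      cubic k₃ k₂ k₁ k₀ u₃ = 0 ∧ cubic k₃ k₂ k₁ k₀ u₂ = 0 ∧ cubic k₃ k₂ k₁ k₀ u₁ = 0 := by
  set M := 1 + (|k₂| + |k₁| + |k₀|) / k₃ + c
  have hM : 1 + (|k₂| + |k₁| + |k₀|) / k₃ ≤ M := by linarith
  have hcM : c < M := by
    have : 0 ≤ (|k₂| + |k₁| + |k₀|) / k₃ := by positivity
    linarith
  have hp0 : 0 < cubic k₃ k₂ k₁ k₀ 0 := by simpa [cubic] using hk₀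
  have hcont {a b : ℝ} : ContinuousOn (cubic k₃ k₂ k₁ k₀) (Set.Icc a b) :=
    (continuous_cubic k₃ k₂ k₁ k₀).continuousOn
  obtain ⟨u₃, ⟨-, hu₃⟩, hpu₃⟩ := intermediate_value_Ioo (by linarith) hcont
    ⟨cubic_neg_of_le_neg_cauchyBound hk₃ (u := -M) (by linarith), hp0⟩
  obtain ⟨u₂, ⟨hu₂, hu₂c⟩, hpu₂⟩ := intermediate_value_Ioo' hc.le hcont ⟨hpc, hp0⟩
  obtain ⟨u₁, ⟨hu₁, -⟩, hpu₁⟩ := intermediate_value_Ioo hcM.le hcont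
    ⟨hpc, cubic_pos_of_cauchyBound_le hk₃ hM⟩
  exact ⟨u₃, u₂, u₁, hu₃, hu₂, hu₂c, hu₁, hpu₃, hpu₂, hpu₁⟩

theorem quadratic_form_pos_of_sq_lt {a b r s t : ℝ} (ha : 0 < a) (h : r ^ 2 < 4 * a * b)
    (ht : t ≠ 0) : 0 < a * s ^ 2 + r * s * t + b * t ^ 2 := by
  have hsq : 4 * a * (a * s ^ 2 + r * s * t + b * t ^ 2)
      = (2 * a * s + r * t) ^ 2 + (4 * a * b - r ^ 2) * t ^ 2 := by ring
  have : 0 < 4 * a * (a * s ^ 2 + r * s * t + b * t ^ 2) := by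
    rw [hsq]
    nlinarith [sq_nonneg (2 * a * s + r * t), sub_pos.2 h, sq_pos_of_ne_zero ht]
  exact pos_of_mul_pos_right this (by positivity)

theorem shengjinFactor_pos {a b x y s t : ℝ} (ha : 0 < a) (hb : 0 < b) (hy : 0 < y)
    (hyx : y < x) (hab : a * b = x ^ 3 * y) (hs : 0 < s) (ht : 0 < t) :
    0 < 4 * a * s ^ 2 + (x ^ 2 + 18 * x * y - 27 * y ^ 2) * s * t + 4 * b * t ^ 2 := by
  rcases le_or_gt (9 * y) x with h | h
  · have hR : 0 < x ^ 2 + 18 * x * y - 27 * y ^ 2 := by nlinarith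
    positivity
  · refine quadratic_form_pos_of_sq_lt (by positivity) ?_ ht.ne'
    have : 4 * (4 * a) * (4 * b) - (x ^ 2 + 18 * x * y - 27 * y ^ 2) ^ 2
        = (x - y) * (9 * y - x) ^ 3 := by linear_combination 64 * hab
    nlinarith [mul_pos (sub_pos.2 hyx) (pow_pos (sub_pos.2 h) 3)]

theorem shengjin_discriminant_eq {d₁ d₂ g₁₁ g₁₂ g₂₁ g₂₂ k₃ k₂ k₁ k₀ : ℝ}
    (hk₃ : k₃ = g₁₁ * (g₁₁ * g₂₂ - g₁₂ * g₂₁) ^ 2)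
    (hk₂ : k₂ = d₁ * (g₁₂ * g₂₁ - 3 * g₁₁ * g₂₂) * (g₁₂ * g₂₁ - g₁₁ * g₂₂))
    (hk₁ : k₁ = -d₁ * (d₂ * g₂₁ * g₁₂ ^ 2 + 2 * d₁ * g₂₁ * g₂₂ * g₁₂ -
      3 * d₁ * g₁₁ * g₂₂ ^ 2))
    (hk₀ : k₀ = d₁ ^ 3 * g₂₂ ^ 2) :
    (k₁ * k₂ - 9 * k₀ * k₃) ^ 2 - 4 * (k₂ ^ 2 - 3 * k₁ * k₃) * (k₁ ^ 2 - 3 * k₀ * k₂)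
      = -(3 * d₁ ^ 3 * d₂ * g₁₂ ^ 4 * g₂₁ ^ 2 * (g₁₂ * g₂₁ - g₁₁ * g₂₂) ^ 2 *
          (4 * (g₁₁ * g₁₂ ^ 2 * g₂₁) * d₂ ^ 2
            + ((g₁₂ * g₂₁) ^ 2 + 18 * (g₁₂ * g₂₁) * (g₁₁ * g₂₂) - 27 * (g₁₁ * g₂₂) ^ 2) * d₂ * d₁
            + 4 * (g₁₂ * g₂₁ ^ 2 * g₂₂) * d₁ ^ 2)) := by
  subst hk₃ hk₂ hk₁ hk₀; ring

theorem cubic_eq_at_ustar {d₁ d₂ g₁₁ g₁₂ g₂₁ g₂₂ k₃ k₂ k₁ k₀ : ℝ}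
    (hD : g₁₂ * g₂₁ - g₁₁ * g₂₂ ≠ 0)
    (hk₃ : k₃ = g₁₁ * (g₁₁ * g₂₂ - g₁₂ * g₂₁) ^ 2)
    (hk₂ : k₂ = d₁ * (g₁₂ * g₂₁ - 3 * g₁₁ * g₂₂) * (g₁₂ * g₂₁ - g₁₁ * g₂₂))
    (hk₁ : k₁ = -d₁ * (d₂ * g₂₁ * g₁₂ ^ 2 + 2 * d₁ * g₂₁ * g₂₂ * g₁₂ -
      3 * d₁ * g₁₁ * g₂₂ ^ 2))
    (hk₀ : k₀ = d₁ ^ 3 * g₂₂ ^ 2) :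
    cubic k₃ k₂ k₁ k₀ (d₁ * g₂₂ / (g₁₂ * g₂₁ - g₁₁ * g₂₂))
      = -(d₁ ^ 2 * d₂ * g₁₂ ^ 2 * g₂₁ * g₂₂ / (g₁₂ * g₂₁ - g₁₁ * g₂₂)) := by
  subst hk₃ hk₂ hk₁ hk₀
  unfold cubic
  field_simp
  ring

/-- Under (H2), the Shengjin discriminant of the cubic `p` governing the
extreme points of `σ` is strictly negative, so `p` has three distinct real
roots `u₃ < u₂ < u₁` satisfying `u₃ < 0 < u₂ ≤ u⋆ < u₁`, where
`u⋆ = d₁·g₂₂/(g₁₂·g₂₁ − g₁₁·g₂₂) > 0`. -/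
theorem stmt_9 (d₁ d₂ g₁₁ g₁₂ g₂₁ g₂₂ : ℝ)
    (hd₁ : 0 < d₁) (hd₂ : 0 < d₂)
    (hg₁₁ : 0 < g₁₁) (hg₁₂ : 0 < g₁₂) (hg₂₁ : 0 < g₂₁) (hg₂₂ : 0 < g₂₂)
    (hH2 : g₁₁ * g₂₂ - g₁₂ * g₂₁ < 0)
    (k₃ k₂ k₁ k₀ A B C ustar : ℝ)
    (hk₃ : k₃ = g₁₁ * (g₁₁ * g₂₂ - g₁₂ * g₂₁) ^ 2)
    (hk₂ : k₂ = d₁ * (g₁₂ * g₂₁ - 3 * g₁₁ * g₂₂) * (g₁₂ * g₂₁ - g₁₁ * g₂₂))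
    (hk₁ : k₁ = -d₁ * (d₂ * g₂₁ * g₁₂ ^ 2 + 2 * d₁ * g₂₁ * g₂₂ * g₁₂ -
      3 * d₁ * g₁₁ * g₂₂ ^ 2))
    (hk₀ : k₀ = d₁ ^ 3 * g₂₂ ^ 2)
    (hA : A = k₂ ^ 2 - 3 * k₁ * k₃)
    (hB : B = k₁ * k₂ - 9 * k₀ * k₃)
    (hC : C = k₁ ^ 2 - 3 * k₀ * k₂)
    (hustar : ustar = d₁ * g₂₂ / (g₁₂ * g₂₁ - g₁₁ * g₂₂)) :
    B ^ 2 - 4 * A * C < 0 ∧ 0 < ustar ∧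
    ∃ u₃ u₂ u₁ : ℝ, u₃ < u₂ ∧ u₂ < u₁ ∧
      k₃ * u₃ ^ 3 + k₂ * u₃ ^ 2 + k₁ * u₃ + k₀ = 0 ∧
      k₃ * u₂ ^ 3 + k₂ * u₂ ^ 2 + k₁ * u₂ + k₀ = 0 ∧
      k₃ * u₁ ^ 3 + k₂ * u₁ ^ 2 + k₁ * u₁ + k₀ = 0 ∧
      u₃ < 0 ∧ 0 < u₂ ∧ u₂ ≤ ustar ∧ ustar < u₁ := by
  have hD : 0 < g₁₂ * g₂₁ - g₁₁ * g₂₂ := by linarith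
  have hustar_pos : 0 < ustar := hustar ▸ div_pos (mul_pos hd₁ hg₂₂) hD
  refine ⟨?_, hustar_pos, ?_⟩
  · have hE := shengjinFactor_pos (a := g₁₁ * g₁₂ ^ 2 * g₂₁) (b := g₁₂ * g₂₁ ^ 2 * g₂₂)
      (x := g₁₂ * g₂₁) (by positivity) (by positivity) (mul_pos hg₁₁ hg₂₂) (by linarith)
      (by ring) hd₂ hd₁
    rw [hA, hB, hC, shengjin_discriminant_eq hk₃ hk₂ hk₁ hk₀, neg_lt_zero]
    exact mul_pos (mul_pos (by positivity) (pow_pos hD 2)) hE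
  · have hk₃_pos : 0 < k₃ := hk₃ ▸ mul_pos hg₁₁ (sq_pos_of_neg hH2)
    have hk₀_pos : 0 < k₀ := hk₀ ▸ by positivity
    have hp_ustar : cubic k₃ k₂ k₁ k₀ ustar < 0 := by
      rw [hustar, cubic_eq_at_ustar hD.ne' hk₃ hk₂ hk₁ hk₀, neg_lt_zero]
      exact div_pos (by positivity) hD
    obtain ⟨u₃, u₂, u₁, hu₃, hu₂, hu₂_lt, hlt_u₁, hp₃, hp₂, hp₁⟩ :=
      exists_roots_of_cubic_neg hk₃_pos hk₀_pos hustar_pos hp_ustar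
    exact ⟨u₃, u₂, u₁, hu₃.trans hu₂, hu₂_lt.trans hlt_u₁, hp₃, hp₂, hp₁, hu₃, hu₂, hu₂_lt.le,
      hlt_u₁⟩
end

section
/- Assume (H2). Then σ(u) → −∞ as u → u⋆ from the right, and σ(u) → −∞ as u → +∞. -/
open Filter Real

/-- Under (H2), `σ(u) → −∞` as `u → u⋆⁺` and as `u → +∞`. -/
theorem stmt_10 (d₁ d₂ θ₁ θ₂ g₁₁ g₁₂ g₂₁ g₂₂ c₁ c₂ : ℝ)
    (hd₁ : 0 < d₁) (hd₂ : 0 < d₂) (hθ₁ : 0 < θ₁) (hθ₂ : θ₂ < 0)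
    (hg₁₁ : 0 < g₁₁) (hg₁₂ : 0 < g₁₂) (hg₂₁ : 0 < g₂₁) (hg₂₂ : 0 < g₂₂)
    (hH2 : g₁₁ * g₂₂ - g₁₂ * g₂₁ < 0) :
    Filter.Tendsto
      (fun u : ℝ =>
        (1 / θ₁) * (c₁ - d₁ * Real.log u - g₁₁ * u -
          g₁₂ * (d₂ * (d₁ + g₁₁ * u) / (u * (g₁₂ * g₂₁ - g₁₁ * g₂₂) - d₁ * g₂₂))) -
        (1 / θ₂) * (c₂ -
          d₂ * Real.log (d₂ * (d₁ + g₁₁ * u) / (u * (g₁₂ * g₂₁ - g₁₁ * g₂₂) - d₁ * g₂₂)) -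
          g₂₁ * u -
          g₂₂ * (d₂ * (d₁ + g₁₁ * u) / (u * (g₁₂ * g₂₁ - g₁₁ * g₂₂) - d₁ * g₂₂))))
      (nhdsWithin (d₁ * g₂₂ / (g₁₂ * g₂₁ - g₁₁ * g₂₂))
        (Set.Ioi (d₁ * g₂₂ / (g₁₂ * g₂₁ - g₁₁ * g₂₂))))
      Filter.atBot ∧
    Filter.Tendsto
      (fun u : ℝ =>
        (1 / θ₁) * (c₁ - d₁ * Real.log u - g₁₁ * u -
          g₁₂ * (d₂ * (d₁ + g₁₁ * u) / (u * (g₁₂ * g₂₁ - g₁₁ * g₂₂) - d₁ * g₂₂))) -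
        (1 / θ₂) * (c₂ -
          d₂ * Real.log (d₂ * (d₁ + g₁₁ * u) / (u * (g₁₂ * g₂₁ - g₁₁ * g₂₂) - d₁ * g₂₂)) -
          g₂₁ * u -
          g₂₂ * (d₂ * (d₁ + g₁₁ * u) / (u * (g₁₂ * g₂₁ - g₁₁ * g₂₂) - d₁ * g₂₂))))
      Filter.atTop Filter.atBot := by
  set Δ : ℝ := g₁₂ * g₂₁ - g₁₁ * g₂₂ with hΔdef
  have hΔ : 0 < Δ := by simp only [hΔdef]; linarith
  set u' : ℝ := d₁ * g₂₂ / Δ with hu'def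
  have hu' : 0 < u' := div_pos (by positivity) hΔ
  set N : ℝ → ℝ := fun u => d₂ * (d₁ + g₁₁ * u) with hNdef
  set D : ℝ → ℝ := fun u => u * Δ - d₁ * g₂₂ with hDdef
  have hDu' : D u' = 0 := by
    simp only [hDdef, hu'def]
    field_simp
    ring
  constructor
  · -- limit as u → u'⁺
    set l : Filter ℝ := nhdsWithin u' (Set.Ioi u') with hldef
    have hid : Tendsto (fun u : ℝ => u) l (nhds u') :=
      tendsto_id.mono_right nhdsWithin_le_nhds
    have hD : Tendsto D l (nhdsWithin 0 (Set.Ioi 0)) := by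
      rw [tendsto_nhdsWithin_iff]
      constructor
      · have : Tendsto D l (nhds (D u')) := by
          exact ((hid.mul_const Δ).sub tendsto_const_nhds)
        rwa [hDu'] at this
      · filter_upwards [self_mem_nhdsWithin] with u hu
        have : u' * Δ < u * Δ := by
          exact mul_lt_mul_of_pos_right hu hΔ
        have hu'Δ : u' * Δ = d₁ * g₂₂ := by
          rw [hu'def]; field_simp
        simp only [hDdef, Set.mem_Ioi]
        linarith
    have hDinv : Tendsto (fun u => (D u)⁻¹) l atTop := hD.inv_tendsto_nhdsGT_zero
    have hN : Tendsto N l (nhds (d₂ * (d₁ + g₁₁ * u'))) := by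
      exact tendsto_const_nhds.mul (tendsto_const_nhds.add (hid.const_mul g₁₁))
    have hNpos : 0 < d₂ * (d₁ + g₁₁ * u') := by positivity
    have hV : Tendsto (fun u => N u / D u) l atTop := by
      simp only [div_eq_mul_inv]
      exact Filter.Tendsto.pos_mul_atTop hNpos hN hDinv
    have hlogV : Tendsto (fun u => Real.log (N u / D u)) l atTop :=
      Real.tendsto_log_atTop.comp hV
    have hlogu : Tendsto (fun u => Real.log u) l (nhds (Real.log u')) :=
      ((Real.continuousAt_log (ne_of_gt hu')).tendsto).comp hid
    -- convergent part
    have hC : Tendsto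
        (fun u => (1 / θ₁) * (c₁ - d₁ * Real.log u - g₁₁ * u) - (1 / θ₂) * (c₂ - g₂₁ * u))
        l (nhds ((1 / θ₁) * (c₁ - d₁ * Real.log u' - g₁₁ * u') - (1 / θ₂) * (c₂ - g₂₁ * u'))) := by
      exact (tendsto_const_nhds.mul ((tendsto_const_nhds.sub (hlogu.const_mul d₁)).sub
        (hid.const_mul g₁₁))).sub
        (tendsto_const_nhds.mul (tendsto_const_nhds.sub (hid.const_mul g₂₁)))
    have hc1 : g₂₂ / θ₂ - g₁₂ / θ₁ < 0 := by
      have h1 : g₂₂ / θ₂ < 0 := div_neg_of_pos_of_neg hg₂₂ hθ₂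
      have h2 : 0 < g₁₂ / θ₁ := div_pos hg₁₂ hθ₁
      linarith
    have hc2 : d₂ / θ₂ < 0 := div_neg_of_pos_of_neg hd₂ hθ₂
    have h1 : Tendsto (fun u => (g₂₂ / θ₂ - g₁₂ / θ₁) * (N u / D u)) l atBot :=
      Filter.Tendsto.const_mul_atTop_of_neg hc1 hV
    have h2 : Tendsto (fun u => (d₂ / θ₂) * Real.log (N u / D u)) l atBot :=
      Filter.Tendsto.const_mul_atTop_of_neg hc2 hlogV
    have htot := hC.add_atBot (Filter.Tendsto.atBot_add_atBot h1 h2)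
    refine htot.congr fun u => ?_
    simp only [hNdef, hDdef, hΔdef]
    ring
  · -- limit as u → +∞
    have hev : ∀ᶠ u : ℝ in atTop, u ≠ 0 := eventually_ne_atTop 0
    have hVlim : Tendsto (fun u => N u / D u) atTop (nhds (d₂ * g₁₁ / Δ)) := by
      have hinv : Tendsto (fun u : ℝ => u⁻¹) atTop (nhds (0 : ℝ)) := tendsto_inv_atTop_zero
      have hnum : Tendsto (fun u : ℝ => d₂ * (d₁ * u⁻¹ + g₁₁)) atTop (nhds (d₂ * g₁₁)) := by
        have h : Tendsto (fun u : ℝ => d₂ * (d₁ * u⁻¹ + g₁₁)) atTop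
            (nhds (d₂ * (d₁ * 0 + g₁₁))) :=
          tendsto_const_nhds.mul ((hinv.const_mul d₁).add tendsto_const_nhds)
        simpa using h
      have hden : Tendsto (fun u : ℝ => Δ - d₁ * g₂₂ * u⁻¹) atTop (nhds Δ) := by
        have h : Tendsto (fun u : ℝ => Δ - d₁ * g₂₂ * u⁻¹) atTop
            (nhds (Δ - d₁ * g₂₂ * 0)) :=
          tendsto_const_nhds.sub (hinv.const_mul (d₁ * g₂₂))
        simpa using h
      have hlim := hnum.div hden (ne_of_gt hΔ)
      refine Tendsto.congr' ?_ hlim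
      filter_upwards [hev] with u hu
      have e1 : d₂ * (d₁ * u⁻¹ + g₁₁) = N u * u⁻¹ := by
        simp only [hNdef]
        field_simp
      have e2 : Δ - d₁ * g₂₂ * u⁻¹ = D u * u⁻¹ := by
        simp only [hDdef]
        field_simp
      rw [Pi.div_apply, e1, e2, mul_div_mul_right _ _ (inv_ne_zero hu)]
    have hVpos : 0 < d₂ * g₁₁ / Δ := by positivity
    have hlogV : Tendsto (fun u => Real.log (N u / D u)) atTop (nhds (Real.log (d₂ * g₁₁ / Δ))) :=
      ((Real.continuousAt_log (ne_of_gt hVpos)).tendsto).comp hVlim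
    have hC : Tendsto
        (fun u => (1 / θ₁) * (c₁ - g₁₂ * (N u / D u)) -
          (1 / θ₂) * (c₂ - d₂ * Real.log (N u / D u) - g₂₂ * (N u / D u)))
        atTop (nhds ((1 / θ₁) * (c₁ - g₁₂ * (d₂ * g₁₁ / Δ)) -
          (1 / θ₂) * (c₂ - d₂ * Real.log (d₂ * g₁₁ / Δ) - g₂₂ * (d₂ * g₁₁ / Δ)))) := by
      exact (tendsto_const_nhds.mul (tendsto_const_nhds.sub (hVlim.const_mul g₁₂))).sub
        (tendsto_const_nhds.mul ((tendsto_const_nhds.sub (hlogV.const_mul d₂)).sub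
          (hVlim.const_mul g₂₂)))
    have hc1 : g₂₁ / θ₂ - g₁₁ / θ₁ < 0 := by
      have h1 : g₂₁ / θ₂ < 0 := div_neg_of_pos_of_neg hg₂₁ hθ₂
      have h2 : 0 < g₁₁ / θ₁ := div_pos hg₁₁ hθ₁
      linarith
    have hc2 : -(d₁ / θ₁) < 0 := by
      have : 0 < d₁ / θ₁ := div_pos hd₁ hθ₁
      linarith
    have h1 : Tendsto (fun u : ℝ => (g₂₁ / θ₂ - g₁₁ / θ₁) * u) atTop atBot :=
      Filter.Tendsto.const_mul_atTop_of_neg hc1 tendsto_id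
    have h2 : Tendsto (fun u : ℝ => (-(d₁ / θ₁)) * Real.log u) atTop atBot :=
      Filter.Tendsto.const_mul_atTop_of_neg hc2 Real.tendsto_log_atTop
    have htot := hC.add_atBot (Filter.Tendsto.atBot_add_atBot h1 h2)
    refine htot.congr fun u => ?_
    simp only [hNdef, hDdef, hΔdef]
    ring
end

section
/- Assume (H2) and that σ(u) < 0 for every u > u⋆. Then for every φ ∈ ℝ the system (AE) has exactly one solution (u, v) with u > 0 and v > 0; moreover, writing this unique solution as (U(φ), V(φ)), the function U is strictly decreasing on ℝ and the function V is strictly increasing on ℝ. (Theorem 3.1(ii): uniqueness of monotone solutions under (H2) when σ is everywhere negative.) -/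
/-!
Eliminating `φ`, the combination `θ₁ · (AE₂) - θ₂ · (AE₁)` reads
`f₁ u + f₂ v = θ₁ c₂ - θ₂ c₁`, where each `fᵢ x = D log x + B x` has `D > 0`, `B ≥ 0`
(by the signs of `θ₁, θ₂`) and so is an increasing bijection of `(0, ∞)` onto `ℝ`. Hence every
solution lies on the graph of a decreasing function `v = 𝒲 u`, and `φ = Φ u` is then determined
by the first equation. Along this curve `Φ'` has the sign of minus the Jacobian determinant of
(AE) in `(u, v)`, which is positive exactly when `v < V(u)` (or `u ≤ u⋆`); and `σ(u) < 0` says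
precisely that `𝒲 u < V(u)`. So `Φ` is a decreasing bijection of `(0, ∞)` onto `ℝ`, and
`U = Φ⁻¹`, `V = 𝒲 ∘ U`.
-/

open Real Set

noncomputable def logLin (D B x : ℝ) : ℝ := D * log x + B * x

section LogLin

variable {D B : ℝ}

lemma hasDerivAt_logLin {x : ℝ} (hx : x ≠ 0) : HasDerivAt (logLin D B) (D / x + B) x := by
  have h : HasDerivAt (fun y ↦ D * log y + B * y) (D * x⁻¹ + B * 1) x :=
    ((hasDerivAt_log hx).const_mul D).add ((hasDerivAt_id' x).const_mul B)
  exact h.congr_deriv (by ring)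

lemma continuousOn_logLin : ContinuousOn (logLin D B) (Ioi 0) :=
  fun _ hx ↦ (hasDerivAt_logLin (ne_of_gt hx)).continuousAt.continuousWithinAt

lemma strictMonoOn_logLin (hD : 0 < D) (hB : 0 ≤ B) : StrictMonoOn (logLin D B) (Ioi 0) :=
  fun x hx y _ hxy ↦ by
    unfold logLin
    exact add_lt_add_of_lt_of_le (by gcongr) (by gcongr)

lemma surjOn_logLin (hD : 0 < D) (hB : 0 ≤ B) : SurjOn (logLin D B) (Ioi 0) univ := by
  intro y _
  set a := min 1 (exp ((y - B) / D))
  set b := max 1 (exp (y / D))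
  have ha : 0 < a := lt_min one_pos (exp_pos _)
  have hfa : logLin D B a ≤ y := by
    have hlog : D * log a ≤ y - B :=
      (le_div_iff₀' hD).1 ((log_le_iff_le_exp ha).2 (min_le_right _ _))
    have : B * a ≤ B := mul_le_of_le_one_right hB (min_le_left _ _)
    unfold logLin
    linarith
  have hfb : y ≤ logLin D B b := by
    have hlog : y ≤ D * log b :=
      (div_le_iff₀' hD).1 ((le_log_iff_exp_le (one_pos.trans_le (le_max_left _ _))).2
        (le_max_right _ _))
    have : 0 ≤ B * b := mul_nonneg hB (zero_le_one.trans (le_max_left _ _))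
    unfold logLin
    linarith
  obtain ⟨x, hx, rfl⟩ := intermediate_value_Icc ((min_le_left _ _).trans (le_max_left _ _))
    (continuousOn_logLin.mono fun _ hx ↦ ha.trans_le hx.1) ⟨hfa, hfb⟩
  exact ⟨x, ha.trans_le hx.1, rfl⟩

noncomputable def logLinInv (D B : ℝ) : ℝ → ℝ := Function.invFunOn (logLin D B) (Ioi 0)

lemma logLinInv_pos (hD : 0 < D) (hB : 0 ≤ B) (y : ℝ) : 0 < logLinInv D B y :=
  Function.invFunOn_mem (surjOn_logLin hD hB (mem_univ y))

lemma logLin_logLinInv (hD : 0 < D) (hB : 0 ≤ B) (y : ℝ) : logLin D B (logLinInv D B y) = y :=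
  Function.invFunOn_eq (surjOn_logLin hD hB (mem_univ y))

lemma logLinInv_logLin (hD : 0 < D) (hB : 0 ≤ B) {x : ℝ} (hx : 0 < x) :
    logLinInv D B (logLin D B x) = x :=
  (strictMonoOn_logLin hD hB).injOn (logLinInv_pos hD hB _) hx (logLin_logLinInv hD hB _)

lemma strictMono_logLinInv (hD : 0 < D) (hB : 0 ≤ B) : StrictMono (logLinInv D B) :=
  fun a b hab ↦ by
    rwa [← (strictMonoOn_logLin hD hB).lt_iff_lt (logLinInv_pos hD hB a)
      (logLinInv_pos hD hB b), logLin_logLinInv hD hB, logLin_logLinInv hD hB]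

lemma continuous_logLinInv (hD : 0 < D) (hB : 0 ≤ B) : Continuous (logLinInv D B) :=
  continuous_iff_continuousAt.2 fun y ↦
    ((strictMono_logLinInv hD hB).strictMonoOn univ).continuousAt_of_image_mem_nhds
      Filter.univ_mem (Filter.mem_of_superset (Ioi_mem_nhds (logLinInv_pos hD hB y)) fun _ hx ↦
        ⟨_, mem_univ _, logLinInv_logLin hD hB hx⟩)

lemma hasDerivAt_logLinInv (hD : 0 < D) (hB : 0 ≤ B) (y : ℝ) :
    HasDerivAt (logLinInv D B) (D / logLinInv D B y + B)⁻¹ y :=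
  (hasDerivAt_logLin (logLinInv_pos hD hB y).ne').of_local_left_inverse
    (continuous_logLinInv hD hB).continuousAt
    (add_pos_of_pos_of_nonneg (div_pos hD (logLinInv_pos hD hB y)) hB).ne'
    (Filter.Eventually.of_forall (logLin_logLinInv hD hB))

end LogLin

noncomputable def levelCurve (D₁ B₁ D₂ B₂ κ u : ℝ) : ℝ := logLinInv D₂ B₂ (κ - logLin D₁ B₁ u)

section LevelCurve

variable {D₁ B₁ D₂ B₂ κ : ℝ}

lemma levelCurve_pos (hD₂ : 0 < D₂) (hB₂ : 0 ≤ B₂) (u : ℝ) :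
    0 < levelCurve D₁ B₁ D₂ B₂ κ u :=
  logLinInv_pos hD₂ hB₂ _

lemma logLin_add_logLin_levelCurve (hD₂ : 0 < D₂) (hB₂ : 0 ≤ B₂) (u : ℝ) :
    logLin D₁ B₁ u + logLin D₂ B₂ (levelCurve D₁ B₁ D₂ B₂ κ u) = κ := by
  rw [levelCurve, logLin_logLinInv hD₂ hB₂]
  ring

lemma eq_levelCurve_iff (hD₂ : 0 < D₂) (hB₂ : 0 ≤ B₂) {u v : ℝ} (hv : 0 < v) :
    v = levelCurve D₁ B₁ D₂ B₂ κ u ↔ logLin D₁ B₁ u + logLin D₂ B₂ v = κ := by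
  constructor
  · rintro rfl
    exact logLin_add_logLin_levelCurve hD₂ hB₂ u
  · intro h
    rw [levelCurve, ← h, add_sub_cancel_left, logLinInv_logLin hD₂ hB₂ hv]

lemma strictAntiOn_levelCurve (hD₁ : 0 < D₁) (hB₁ : 0 ≤ B₁) (hD₂ : 0 < D₂) (hB₂ : 0 ≤ B₂) :
    StrictAntiOn (levelCurve D₁ B₁ D₂ B₂ κ) (Ioi 0) :=
  fun _ hx _ hy hxy ↦
    strictMono_logLinInv hD₂ hB₂ (sub_lt_sub_left (strictMonoOn_logLin hD₁ hB₁ hx hy hxy) κ)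

lemma hasDerivAt_levelCurve (hD₂ : 0 < D₂) (hB₂ : 0 ≤ B₂) {u : ℝ} (hu : u ≠ 0) :
    HasDerivAt (levelCurve D₁ B₁ D₂ B₂ κ)
      ((D₂ / levelCurve D₁ B₁ D₂ B₂ κ u + B₂)⁻¹ * -(D₁ / u + B₁)) u :=
  (hasDerivAt_logLinInv hD₂ hB₂ _).comp u ((hasDerivAt_logLin hu).const_sub κ)

end LevelCurve

section AlgebraicSystem

variable {d₁ d₂ θ₁ θ₂ g₁₁ g₁₂ g₂₁ g₂₂ c₁ c₂ : ℝ}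

-- the graph of `𝒲` is the solution set of `θ₁ · (AE₂) - θ₂ · (AE₁)`,
-- and `(u, 𝒲 u)` solves (AE) for `φ = Φ u`
local notation "𝒲" => levelCurve (-θ₂ * d₁) (θ₁ * g₂₁ - θ₂ * g₁₁) (θ₁ * d₂) (θ₁ * g₂₂ - θ₂ * g₁₂) (θ₁ * c₂ - θ₂ * c₁)

local notation "Φ" => fun u ↦ (c₁ - logLin d₁ g₁₁ u - g₁₂ * 𝒲 u) / θ₁

lemma algebraicSystem_iff (hθ₁ : θ₁ ≠ 0) (hD₂ : 0 < θ₁ * d₂) (hB₂ : 0 ≤ θ₁ * g₂₂ - θ₂ * g₁₂)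
    {u v φ : ℝ} (hv : 0 < v) :
    (d₁ * log u + θ₁ * φ + g₁₁ * u + g₁₂ * v = c₁ ∧
      d₂ * log v + θ₂ * φ + g₂₁ * u + g₂₂ * v = c₂) ↔ v = 𝒲 u ∧ Φ u = φ := by
  constructor
  · rintro ⟨e₁, e₂⟩
    have hvW : v = 𝒲 u := (eq_levelCurve_iff hD₂ hB₂ hv).2 (by
      unfold logLin; linear_combination θ₁ * e₂ - θ₂ * e₁)
    refine ⟨hvW, ?_⟩
    simp only [← hvW]
    field_simp
    unfold logLin
    linear_combination -e₁
  · rintro ⟨hvW, rfl⟩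
    have h := (eq_levelCurve_iff hD₂ hB₂ hv).1 hvW
    simp only [← hvW]
    unfold logLin at h ⊢
    constructor
    · field_simp
      ring
    · field_simp
      linear_combination h

lemma levelCurve_mul_lt (hd₁ : 0 < d₁) (hd₂ : 0 < d₂) (hθ₁ : 0 < θ₁) (hθ₂ : θ₂ < 0)
    (hg₁₁ : 0 ≤ g₁₁) (hg₁₂ : 0 ≤ g₁₂) (hg₂₂ : 0 ≤ g₂₂)
    (hH2 : g₁₁ * g₂₂ - g₁₂ * g₂₁ < 0)
    (hσ : ∀ u : ℝ, d₁ * g₂₂ / (g₁₂ * g₂₁ - g₁₁ * g₂₂) < u →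
      (1 / θ₁) * (c₁ - d₁ * Real.log u - g₁₁ * u -
        g₁₂ * (d₂ * (d₁ + g₁₁ * u) / (u * (g₁₂ * g₂₁ - g₁₁ * g₂₂) - d₁ * g₂₂))) -
      (1 / θ₂) * (c₂ -
        d₂ * Real.log (d₂ * (d₁ + g₁₁ * u) / (u * (g₁₂ * g₂₁ - g₁₁ * g₂₂) - d₁ * g₂₂)) -
        g₂₁ * u -
        g₂₂ * (d₂ * (d₁ + g₁₁ * u) / (u * (g₁₂ * g₂₁ - g₁₁ * g₂₂) - d₁ * g₂₂))) < 0)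
    {u : ℝ} (hu : 0 < u) :
    𝒲 u * (u * (g₁₂ * g₂₁ - g₁₁ * g₂₂) - d₁ * g₂₂) < d₂ * (d₁ + g₁₁ * u) := by
  have hD₂ : 0 < θ₁ * d₂ := mul_pos hθ₁ hd₂
  have hB₂ : 0 ≤ θ₁ * g₂₂ - θ₂ * g₁₂ := by nlinarith
  have hpos : 0 < d₂ * (d₁ + g₁₁ * u) := by positivity
  rcases le_or_gt (u * (g₁₂ * g₂₁ - g₁₁ * g₂₂) - d₁ * g₂₂) 0 with hle | hgt
  · exact (mul_nonpos_of_nonneg_of_nonpos (levelCurve_pos hD₂ hB₂ u).le hle).trans_lt hpos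
  have hσu := hσ u (by rw [div_lt_iff₀ (by linarith)]; linarith)
  set V := d₂ * (d₁ + g₁₁ * u) / (u * (g₁₂ * g₂₁ - g₁₁ * g₂₂) - d₁ * g₂₂)
  have hV : 0 < V := div_pos hpos hgt
  -- `σ(u) < 0` says that `(u, V)` lies strictly above the level curve
  have hσV : logLin (-θ₂ * d₁) (θ₁ * g₂₁ - θ₂ * g₁₁) u
      + logLin (θ₁ * d₂) (θ₁ * g₂₂ - θ₂ * g₁₂) V - (θ₁ * c₂ - θ₂ * c₁) =
      θ₁ * θ₂ * ((1 / θ₁) * (c₁ - d₁ * log u - g₁₁ * u - g₁₂ * V) -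
        (1 / θ₂) * (c₂ - d₂ * log V - g₂₁ * u - g₂₂ * V)) := by
    unfold logLin
    field_simp [hθ₂.ne]
    ring
  have hW : logLin (-θ₂ * d₁) (θ₁ * g₂₁ - θ₂ * g₁₁) u
      + logLin (θ₁ * d₂) (θ₁ * g₂₂ - θ₂ * g₁₂) (𝒲 u) = θ₁ * c₂ - θ₂ * c₁ :=
    logLin_add_logLin_levelCurve hD₂ hB₂ u
  have hWV : 𝒲 u < V := by
    rw [← (strictMonoOn_logLin hD₂ hB₂).lt_iff_lt (levelCurve_pos hD₂ hB₂ u) hV]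
    nlinarith [mul_neg_of_pos_of_neg hθ₁ hθ₂]
  exact (lt_div_iff₀ hgt).1 hWV

lemma hasDerivAt_Φ (hD₂ : 0 < θ₁ * d₂) (hB₂ : 0 ≤ θ₁ * g₂₂ - θ₂ * g₁₂) {u : ℝ}
    (hu : u ≠ 0) :
    HasDerivAt Φ ((-(d₁ / u + g₁₁) - g₁₂ * ((θ₁ * d₂ / 𝒲 u + (θ₁ * g₂₂ - θ₂ * g₁₂))⁻¹ *
      -(-θ₂ * d₁ / u + (θ₁ * g₂₁ - θ₂ * g₁₁)))) / θ₁) u :=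
  (((hasDerivAt_logLin hu).const_sub c₁).sub
    ((hasDerivAt_levelCurve hD₂ hB₂ hu).const_mul g₁₂)).div_const θ₁

lemma continuousOn_Φ (hD₂ : 0 < θ₁ * d₂) (hB₂ : 0 ≤ θ₁ * g₂₂ - θ₂ * g₁₂) :
    ContinuousOn Φ (Ioi 0) :=
  fun _ hu ↦ (hasDerivAt_Φ hD₂ hB₂ (ne_of_gt hu)).continuousAt.continuousWithinAt

lemma strictAntiOn_Φ (hθ₁ : 0 < θ₁) (hD₂ : 0 < θ₁ * d₂) (hB₂ : 0 ≤ θ₁ * g₂₂ - θ₂ * g₁₂)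
    (hbelow : ∀ u, 0 < u →
      𝒲 u * (u * (g₁₂ * g₂₁ - g₁₁ * g₂₂) - d₁ * g₂₂) < d₂ * (d₁ + g₁₁ * u)) :
    StrictAntiOn Φ (Ioi 0) := by
  refine strictAntiOn_of_hasDerivWithinAt_neg (convex_Ioi 0)
    (continuousOn_Φ hD₂ hB₂)
    (fun u hu ↦ (hasDerivAt_Φ hD₂ hB₂ (ne_of_gt (interior_subset hu))).hasDerivWithinAt)
    fun u hu ↦ ?_
  rw [interior_Ioi, mem_Ioi] at hu
  set v := 𝒲 u
  have hv : 0 < v := levelCurve_pos hD₂ hB₂ u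
  have hP : 0 < θ₁ * d₂ / v + (θ₁ * g₂₂ - θ₂ * g₁₂) :=
    add_pos_of_pos_of_nonneg (div_pos hD₂ hv) hB₂
  -- the right side is `θ₁ / (u v)` times the Jacobian determinant
  -- `(d₁ + g₁₁ u) (d₂ + g₂₂ v) - g₁₂ g₂₁ u v` of (AE) in `(u, v)`
  have hdet : (d₁ / u + g₁₁) * (θ₁ * d₂ / v + (θ₁ * g₂₂ - θ₂ * g₁₂))
      - g₁₂ * (-θ₂ * d₁ / u + (θ₁ * g₂₁ - θ₂ * g₁₁)) =
      θ₁ * (d₂ * (d₁ + g₁₁ * u) - v * (u * (g₁₂ * g₂₁ - g₁₁ * g₂₂) - d₁ * g₂₂)) / (u * v) := by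
    field_simp
    ring
  have hdet_pos : 0 < θ₁ * (d₂ * (d₁ + g₁₁ * u) -
      v * (u * (g₁₂ * g₂₁ - g₁₁ * g₂₂) - d₁ * g₂₂)) / (u * v) :=
    div_pos (mul_pos hθ₁ (sub_pos.2 (hbelow u hu))) (mul_pos hu hv)
  have hlt : g₁₂ * (-θ₂ * d₁ / u + (θ₁ * g₂₁ - θ₂ * g₁₁)) /
      (θ₁ * d₂ / v + (θ₁ * g₂₂ - θ₂ * g₁₂)) < d₁ / u + g₁₁ :=
    (div_lt_iff₀ hP).2 (by linarith)
  refine div_neg_of_neg_of_pos ?_ hθ₁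
  rw [show ∀ x y : ℝ, g₁₂ * (x⁻¹ * -y) = -(g₁₂ * y / x) from fun _ _ ↦ by ring]
  linarith

lemma surjOn_Φ (hd₁ : 0 < d₁) (hd₂ : 0 < d₂) (hθ₁ : 0 < θ₁) (hθ₂ : θ₂ < 0)
    (hg₁₁ : 0 ≤ g₁₁) (hg₁₂ : 0 ≤ g₁₂) (hg₂₁ : 0 ≤ g₂₁) (hg₂₂ : 0 ≤ g₂₂)
    (hD₁ : 0 < -θ₂ * d₁) (hB₁ : 0 ≤ θ₁ * g₂₁ - θ₂ * g₁₁)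
    (hD₂ : 0 < θ₁ * d₂) (hB₂ : 0 ≤ θ₁ * g₂₂ - θ₂ * g₁₂) :
    SurjOn Φ (Ioi 0) univ := by
  intro t _
  obtain ⟨u₂, hu₂, hΦu₂⟩ : ∃ u₂, 0 < u₂ ∧ Φ u₂ ≤ t := by
    refine ⟨logLinInv d₁ g₁₁ (c₁ - θ₁ * t), logLinInv_pos hd₁ hg₁₁ _, ?_⟩
    beta_reduce
    rw [logLin_logLinInv hd₁ hg₁₁, div_le_iff₀ hθ₁]
    nlinarith [show 0 < 𝒲 (logLinInv d₁ g₁₁ (c₁ - θ₁ * t)) from levelCurve_pos hD₂ hB₂ _]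
  -- at the point `u₁` where the curve reaches the height `M`,
  -- the second equation forces `φ ≥ t`
  obtain ⟨u₁, hu₁, hΦu₁⟩ : ∃ u₁, 0 < u₁ ∧ t ≤ Φ u₁ := by
    set M := logLinInv d₂ g₂₂ (c₂ - θ₂ * t)
    have hM : 0 < M := logLinInv_pos hd₂ hg₂₂ _
    set u₁ := logLinInv (-θ₂ * d₁) (θ₁ * g₂₁ - θ₂ * g₁₁)
      (θ₁ * c₂ - θ₂ * c₁ - logLin (θ₁ * d₂) (θ₁ * g₂₂ - θ₂ * g₁₂) M)
    have hu₁ : 0 < u₁ := logLinInv_pos hD₁ hB₁ _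
    have hMW : M = 𝒲 u₁ := (eq_levelCurve_iff hD₂ hB₂ hM).2 (by
      rw [logLin_logLinInv hD₁ hB₁]
      ring)
    have e₂ := ((algebraicSystem_iff hθ₁.ne' hD₂ hB₂ hM).2 ⟨hMW, rfl⟩).2
    have hMt := logLin_logLinInv hd₂ hg₂₂ (c₂ - θ₂ * t)
    unfold logLin at hMt
    refine ⟨u₁, hu₁, ?_⟩
    nlinarith
  obtain ⟨u, hu, hΦu⟩ := intermediate_value_uIcc
    ((continuousOn_Φ hD₂ hB₂).mono fun _ hx ↦ (lt_min hu₁ hu₂).trans_le hx.1)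
    (mem_uIcc.2 (Or.inr ⟨hΦu₂, hΦu₁⟩))
  exact ⟨u, (lt_min hu₁ hu₂).trans_le hu.1, hΦu⟩

lemma exists_solution_of_levelCurve_mul_lt (hd₁ : 0 < d₁) (hd₂ : 0 < d₂) (hθ₁ : 0 < θ₁)
    (hθ₂ : θ₂ < 0) (hg₁₁ : 0 ≤ g₁₁) (hg₁₂ : 0 ≤ g₁₂) (hg₂₁ : 0 ≤ g₂₁) (hg₂₂ : 0 ≤ g₂₂)
    (hbelow : ∀ u, 0 < u →
      𝒲 u * (u * (g₁₂ * g₂₁ - g₁₁ * g₂₂) - d₁ * g₂₂) < d₂ * (d₁ + g₁₁ * u)) :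
    ∃ U V : ℝ → ℝ,
      (∀ φ : ℝ, 0 < U φ ∧ 0 < V φ ∧
        d₁ * Real.log (U φ) + θ₁ * φ + g₁₁ * U φ + g₁₂ * V φ = c₁ ∧
        d₂ * Real.log (V φ) + θ₂ * φ + g₂₁ * U φ + g₂₂ * V φ = c₂ ∧
        ∀ a b : ℝ, 0 < a → 0 < b →
          d₁ * Real.log a + θ₁ * φ + g₁₁ * a + g₁₂ * b = c₁ →
          d₂ * Real.log b + θ₂ * φ + g₂₁ * a + g₂₂ * b = c₂ →
          a = U φ ∧ b = V φ) ∧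
      StrictAnti U ∧ StrictMono V := by
  have hD₁ : 0 < -θ₂ * d₁ := mul_pos (neg_pos.2 hθ₂) hd₁
  have hB₁ : 0 ≤ θ₁ * g₂₁ - θ₂ * g₁₁ := by nlinarith
  have hD₂ : 0 < θ₁ * d₂ := mul_pos hθ₁ hd₂
  have hB₂ : 0 ≤ θ₁ * g₂₂ - θ₂ * g₁₂ := by nlinarith
  have hanti := strictAntiOn_Φ hθ₁ hD₂ hB₂ hbelow
  choose U hU hΦU using fun t ↦
    surjOn_Φ (c₁ := c₁) (c₂ := c₂) hd₁ hd₂ hθ₁ hθ₂ hg₁₁ hg₁₂ hg₂₁ hg₂₂ hD₁ hB₁ hD₂ hB₂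
      (mem_univ t)
  beta_reduce at hΦU
  have hUanti : StrictAnti U := fun a b hab ↦ by
    rwa [← hanti.lt_iff_gt (hU a) (hU b), hΦU, hΦU]
  refine ⟨U, fun φ ↦ 𝒲 (U φ), fun φ ↦ ?_, hUanti,
    fun a b hab ↦ strictAntiOn_levelCurve hD₁ hB₁ hD₂ hB₂ (hU b) (hU a) (hUanti hab)⟩
  obtain ⟨e₁, e₂⟩ :=
    (algebraicSystem_iff hθ₁.ne' hD₂ hB₂ (levelCurve_pos hD₂ hB₂ _)).2 ⟨rfl, hΦU φ⟩
  refine ⟨hU φ, levelCurve_pos hD₂ hB₂ _, e₁, e₂, fun a b ha hb e₁' e₂' ↦ ?_⟩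
  obtain ⟨rfl, hΦa⟩ := (algebraicSystem_iff hθ₁.ne' hD₂ hB₂ hb).1 ⟨e₁', e₂'⟩
  obtain rfl : a = U φ := hanti.injOn ha (hU φ) (hΦa.trans (hΦU φ).symm)
  exact ⟨rfl, rfl⟩

end AlgebraicSystem

/-- Theorem 3.1(ii): under (H2), if `σ(u) < 0` for all `u > u⋆`, then for every
`φ` the system (AE) has exactly one positive solution `(U(φ), V(φ))`, with `U`
strictly decreasing and `V` strictly increasing. -/
theorem stmt_11 (d₁ d₂ θ₁ θ₂ g₁₁ g₁₂ g₂₁ g₂₂ c₁ c₂ : ℝ)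
    (hd₁ : 0 < d₁) (hd₂ : 0 < d₂) (hθ₁ : 0 < θ₁) (hθ₂ : θ₂ < 0)
    (hg₁₁ : 0 < g₁₁) (hg₁₂ : 0 < g₁₂) (hg₂₁ : 0 < g₂₁) (hg₂₂ : 0 < g₂₂)
    (hH2 : g₁₁ * g₂₂ - g₁₂ * g₂₁ < 0)
    (hσ : ∀ u : ℝ, d₁ * g₂₂ / (g₁₂ * g₂₁ - g₁₁ * g₂₂) < u →
      (1 / θ₁) * (c₁ - d₁ * Real.log u - g₁₁ * u -
        g₁₂ * (d₂ * (d₁ + g₁₁ * u) / (u * (g₁₂ * g₂₁ - g₁₁ * g₂₂) - d₁ * g₂₂))) -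
      (1 / θ₂) * (c₂ -
        d₂ * Real.log (d₂ * (d₁ + g₁₁ * u) / (u * (g₁₂ * g₂₁ - g₁₁ * g₂₂) - d₁ * g₂₂)) -
        g₂₁ * u -
        g₂₂ * (d₂ * (d₁ + g₁₁ * u) / (u * (g₁₂ * g₂₁ - g₁₁ * g₂₂) - d₁ * g₂₂))) < 0) :
    ∃ U V : ℝ → ℝ,
      (∀ φ : ℝ, 0 < U φ ∧ 0 < V φ ∧
        d₁ * Real.log (U φ) + θ₁ * φ + g₁₁ * U φ + g₁₂ * V φ = c₁ ∧
        d₂ * Real.log (V φ) + θ₂ * φ + g₂₁ * U φ + g₂₂ * V φ = c₂ ∧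
        ∀ a b : ℝ, 0 < a → 0 < b →
          d₁ * Real.log a + θ₁ * φ + g₁₁ * a + g₁₂ * b = c₁ →
          d₂ * Real.log b + θ₂ * φ + g₂₁ * a + g₂₂ * b = c₂ →
          a = U φ ∧ b = V φ) ∧
      StrictAnti U ∧ StrictMono V :=
  exists_solution_of_levelCurve_mul_lt hd₁ hd₂ hθ₁ hθ₂ hg₁₁.le hg₁₂.le hg₂₁.le hg₂₂.le
    fun _ hu ↦ levelCurve_mul_lt hd₁ hd₂ hθ₁ hθ₂ hg₁₁.le hg₁₂.le hg₂₂.le hH2 hσ hu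
end

section
/- Let a < b be real numbers, let u : [a, b] → ℝ be continuous with u(x) > 0 for all x ∈ [a, b], and let F : [a, b] → ℝ be continuously differentiable such that the product u·F' is differentiable on [a, b] with (u·F')'(x) = 0 for all x ∈ [a, b]. If u(a)·F(a)·F'(a) ≥ 0 and u(b)·F(b)·F'(b) ≤ 0, then F is constant on [a, b]. (The one-dimensional case of Proposition 2.1: the conservation law ∇·(u∇F) = 0 together with the boundary sign condition u·F·∂F/∂ν ≤ 0 forces F to be constant.) -/
/-!
The flux `u * F'` has derivative zero, so it is a constant `c`. Then `c * F` has derivative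
`c * F' = c ^ 2 / u`, which is positive unless `c = 0`; a strictly increasing `c * F` is
incompatible with the boundary conditions `c * F b ≤ 0 ≤ c * F a`. Hence `c = 0`, so `F' = 0`
and `F` is constant.
-/

open Set

theorem eq_left_of_hasDerivAt_zero {E : Type*} [NormedAddCommGroup E] [NormedSpace ℝ E]
    {f : ℝ → E} {a b : ℝ} (hf : ∀ x ∈ Icc a b, HasDerivAt f 0 x) :
    ∀ x ∈ Icc a b, f x = f a :=
  constant_of_has_deriv_right_zero (fun x hx => (hf x hx).continuousAt.continuousWithinAt)
    fun x hx => (hf x (Ico_subset_Icc_self hx)).hasDerivWithinAt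

theorem flux_eq_zero_of_boundary_sign {a b c : ℝ} {u F F' : ℝ → ℝ} (hab : a < b)
    (hu_pos : ∀ x ∈ Icc a b, 0 < u x) (hF : ∀ x ∈ Icc a b, HasDerivAt F (F' x) x)
    (hflux : ∀ x ∈ Icc a b, u x * F' x = c) (hbc_a : 0 ≤ c * F a) (hbc_b : c * F b ≤ 0) :
    c = 0 := by
  by_contra hc
  have hderiv_pos : ∀ x ∈ Icc a b, 0 < c * F' x := fun x hx =>
    pos_of_mul_pos_right (a := u x)
      (by rw [mul_left_comm, hflux x hx]; exact mul_self_pos.2 hc) (hu_pos x hx).le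
  have hmono : StrictMonoOn (fun x => c * F x) (Icc a b) :=
    strictMonoOn_of_hasDerivWithinAt_pos (convex_Icc a b)
      (fun x hx => ((hF x hx).continuousAt.const_mul c).continuousWithinAt)
      (fun x hx => ((hF x (interior_subset hx)).const_mul c).hasDerivWithinAt)
      fun x hx => hderiv_pos x (interior_subset hx)
  have hlt := hmono (left_mem_Icc.2 hab.le) (right_mem_Icc.2 hab.le) hab
  linarith

theorem stmt_15_general (a b : ℝ) (hab : a < b)
    (u F F' : ℝ → ℝ)
    (hu_pos : ∀ x ∈ Set.Icc a b, 0 < u x)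
    (hF : ∀ x ∈ Set.Icc a b, HasDerivAt F (F' x) x)
    (hflux : ∀ x ∈ Set.Icc a b, HasDerivAt (fun y => u y * F' y) 0 x)
    (hbc_a : 0 ≤ u a * F a * F' a)
    (hbc_b : u b * F b * F' b ≤ 0) :
    ∀ x ∈ Set.Icc a b, F x = F a := by
  have hconst : ∀ x ∈ Icc a b, u x * F' x = u a * F' a := eq_left_of_hasDerivAt_zero hflux
  have hc : u a * F' a = 0 :=
    flux_eq_zero_of_boundary_sign hab hu_pos hF hconst (by linarith)
      (by rw [← hconst b (right_mem_Icc.2 hab.le)]; linarith)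
  have hF'_zero : ∀ x ∈ Icc a b, F' x = 0 := fun x hx =>
    (mul_eq_zero.1 ((hconst x hx).trans hc)).resolve_left (hu_pos x hx).ne'
  exact eq_left_of_hasDerivAt_zero fun x hx => hF'_zero x hx ▸ hF x hx

/-- One-dimensional case of Proposition 2.1: if `(u·F')' = 0` on `[a,b]`,
`u > 0`, and the boundary sign conditions `u(a)F(a)F'(a) ≥ 0`,
`u(b)F(b)F'(b) ≤ 0` hold, then `F` is constant on `[a,b]`. -/
theorem stmt_15 (a b : ℝ) (hab : a < b)
    (u F F' : ℝ → ℝ)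
    (hu_cont : ContinuousOn u (Set.Icc a b))
    (hu_pos : ∀ x ∈ Set.Icc a b, 0 < u x)
    (hF : ∀ x ∈ Set.Icc a b, HasDerivAt F (F' x) x)
    (hF'_cont : ContinuousOn F' (Set.Icc a b))
    (hflux : ∀ x ∈ Set.Icc a b, HasDerivAt (fun y => u y * F' y) 0 x)
    (hbc_a : 0 ≤ u a * F a * F' a)
    (hbc_b : u b * F b * F' b ≤ 0) :
    ∀ x ∈ Set.Icc a b, F x = F a :=
  stmt_15_general a b hab u F F' hu_pos hF hflux hbc_a hbc_b
end
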